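/- arXiv:1503.05049 — 11 statements merged into one kernel-verified Lean document; each statement's English description precedes it below -/
import Mathlib

section
/- Let m ≥ 0 be an integer and let e be a tame Coxeter frieze pattern of width m over ℝ. Then e(i+(m+3), j+(m+3)) = e(i,j) for all i,j ∈ ℤ; in particular every row of the frieze is periodic with period dividing m+3. -/
/-!
Unimodularity and tameness force all rows of the tiling to satisfy one common recurrence
`e i (j + 2) = T j * e i (j + 1) - e i j`. Row `i + (m + 3)` and the negative of row `i` both
solve it and, by the boundary conditions, agree at `j = i + m + 1` and `j = i + m + 2`; hence
`e (i + (m + 3)) j = -e i j`. Reflecting the pattern in the anti-diagonal turns this into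
`e i (j + (m + 3)) = -e i j`, and the two sign changes cancel.
-/

section

variable {R : Type*} [CommRing R]

theorem eq_of_recurrence {u v c : ℤ → R} (a : ℤ)
    (hu : ∀ n, u (n + 2) = c n * u (n + 1) - u n)
    (hv : ∀ n, v (n + 2) = c n * v (n + 1) - v n)
    (h₀ : u a = v a) (h₁ : u (a + 1) = v (a + 1)) : u = v := by
  suffices h : ∀ n, u n = v n ∧ u (n + 1) = v (n + 1) from funext fun n ↦ (h n).1
  intro n
  induction n using Int.inductionOn' (b := a) with
  | zero => exact ⟨h₀, h₁⟩
  | succ k _ ih =>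
    refine ⟨ih.2, ?_⟩
    rw [add_assoc, one_add_one_eq_two, hu, hv, ih.1, ih.2]
  | pred k _ ih =>
    refine ⟨?_, by rw [sub_add_cancel]; exact ih.1⟩
    have hu' := hu (k - 1)
    have hv' := hv (k - 1)
    rw [show k - 1 + 2 = k + 1 by ring, sub_add_cancel] at hu' hv'
    linear_combination hu' - hv' + c (k - 1) * ih.1 - ih.2

variable {f : ℤ → ℤ → R}

def IsSL2Tiling (f : ℤ → ℤ → R) : Prop :=
  ∀ i j, f i j * f (i + 1) (j + 1) - f i (j + 1) * f (i + 1) j = 1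

def IsTame (f : ℤ → ℤ → R) : Prop :=
  ∀ i j, Matrix.det (Matrix.of fun r c : Fin 3 ↦ f (i + (r : ℕ)) (j + (c : ℕ))) = 0

/-- By Cramer's rule, the unique `c` with `f k (j + 2) = c * f k (j + 1) - f k j` for both
`k = i` and `k = i + 1`. -/
def rowCoeff (f : ℤ → ℤ → R) (i j : ℤ) : R :=
  f i j * f (i + 1) (j + 2) - f i (j + 2) * f (i + 1) j

theorem rowCoeff_spec (huni : IsSL2Tiling f) (i j : ℤ) :
    f i (j + 2) = rowCoeff f i j * f i (j + 1) - f i j ∧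
      f (i + 1) (j + 2) = rowCoeff f i j * f (i + 1) (j + 1) - f (i + 1) j := by
  have h₀ := huni i j
  have h₁ := huni i (j + 1)
  rw [add_assoc, one_add_one_eq_two] at h₁
  unfold rowCoeff
  constructor
  · linear_combination (-f i j) * h₁ - f i (j + 2) * h₀
  · linear_combination (-f (i + 1) (j + 2)) * h₀ - f (i + 1) j * h₁

theorem rowCoeff_spec_add_two (huni : IsSL2Tiling f) (htame : IsTame f) (i j : ℤ) :
    f (i + 2) (j + 2) = rowCoeff f i j * f (i + 2) (j + 1) - f (i + 2) j := by
  have h := htame i j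
  rw [Matrix.det_fin_three] at h
  simp only [Matrix.of_apply, Fin.val_zero, Fin.val_one, Fin.val_two, Nat.cast_zero,
    Nat.cast_one, Nat.cast_ofNat, add_zero, Fin.isValue] at h
  have h₀ := huni i j
  have h₁ := huni i (j + 1)
  rw [add_assoc, one_add_one_eq_two] at h₁
  unfold rowCoeff
  linear_combination h - f (i + 2) (j + 2) * h₀ - f (i + 2) j * h₁

theorem rowCoeff_add_one (huni : IsSL2Tiling f) (htame : IsTame f) (i j : ℤ) :
    rowCoeff f (i + 1) j = rowCoeff f i j := by
  have h₁ := (rowCoeff_spec huni i j).2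
  have h₂ := rowCoeff_spec_add_two huni htame i j
  have h := huni (i + 1) j
  rw [add_assoc, one_add_one_eq_two] at h
  rw [rowCoeff, add_assoc, one_add_one_eq_two]
  linear_combination f (i + 1) j * h₂ - f (i + 2) j * h₁ + rowCoeff f i j * h

theorem exists_row_recurrence (huni : IsSL2Tiling f) (htame : IsTame f) :
    ∃ T : ℤ → R, ∀ i j, f i (j + 2) = T j * f i (j + 1) - f i j := by
  refine ⟨rowCoeff f 0, fun i j ↦ ?_⟩
  have hconst : Function.Periodic (rowCoeff f · j) 1 := fun i ↦ rowCoeff_add_one huni htame i j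
  rw [show rowCoeff f 0 j = rowCoeff f i j by simpa using (hconst.int_mul_eq i).symm]
  exact (rowCoeff_spec huni i j).1

structure IsTameFrieze (m : ℕ) (e : ℤ → ℤ → R) : Prop where
  apply_sub_two (i : ℤ) : e i (i - 2) = 0
  apply_sub_one (i : ℤ) : e i (i - 1) = 1
  apply_add_width (i : ℤ) : e i (i + m) = 1
  apply_add_width_add_one (i : ℤ) : e i (i + m + 1) = 0
  unimodular : IsSL2Tiling e
  tame : IsTame e

namespace IsTameFrieze

variable {m : ℕ} {e : ℤ → ℤ → R}

theorem reflect (h : IsTameFrieze m e) : IsTameFrieze m fun i j ↦ e (-j) (-i) where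
  apply_sub_two i := by convert h.apply_sub_two (2 - i) using 2 <;> ring
  apply_sub_one i := by convert h.apply_sub_one (1 - i) using 2 <;> ring
  apply_add_width i := by convert h.apply_add_width (-i - m) using 2 <;> ring
  apply_add_width_add_one i := by convert h.apply_add_width_add_one (-i - m - 1) using 2 <;> ring
  unimodular i j := by
    have h₁ := h.unimodular (-j - 1) (-i - 1)
    rw [sub_add_cancel, sub_add_cancel] at h₁
    beta_reduce
    rw [neg_add', neg_add']
    linear_combination h₁
  tame i j := by
    beta_reduce
    have hM : (Matrix.of fun r c : Fin 3 ↦ e (-(j + (c : ℕ))) (-(i + (r : ℕ)))) =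
        (Matrix.reindex Fin.revPerm Fin.revPerm
          (Matrix.of fun r c : Fin 3 ↦ e (-j - 2 + (r : ℕ)) (-i - 2 + (c : ℕ)))).transpose := by
      ext r c
      simp only [Matrix.of_apply, Matrix.transpose_apply, Matrix.reindex_apply,
        Matrix.submatrix_apply, Fin.revPerm_symm, Fin.revPerm_apply, Fin.val_rev]
      congr 1 <;> omega
    rw [hM, Matrix.det_transpose, Matrix.det_reindex_self]
    exact h.tame _ _

theorem apply_add_width_add_three_left (h : IsTameFrieze m e) (i j : ℤ) :
    e (i + ((m : ℤ) + 3)) j = -e i j := by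
  obtain ⟨T, hT⟩ := exists_row_recurrence h.unimodular h.tame
  have hstart₀ : e (i + ((m : ℤ) + 3)) (i + m + 1) = -e i (i + m + 1) := by
    rw [h.apply_add_width_add_one, neg_zero]
    convert h.apply_sub_two (i + ((m : ℤ) + 3)) using 2
    ring
  have hstart₁ : e (i + ((m : ℤ) + 3)) (i + m + 1 + 1) = -e i (i + m + 1 + 1) := by
    have hrec := hT i (i + m)
    rw [h.apply_add_width_add_one, h.apply_add_width] at hrec
    rw [add_assoc (i + m) 1 1, one_add_one_eq_two, hrec]
    convert h.apply_sub_one (i + ((m : ℤ) + 3)) using 2 <;> ring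
  have hneg : ∀ n, -e i (n + 2) = T n * -e i (n + 1) - -e i n := fun n ↦ by rw [hT]; ring
  exact congrFun (eq_of_recurrence (u := (e (i + ((m : ℤ) + 3)) ·)) (v := (-e i ·))
    (i + m + 1) (hT _) hneg hstart₀ hstart₁) j

theorem apply_add_width_add_three_right (h : IsTameFrieze m e) (i j : ℤ) :
    e i (j + ((m : ℤ) + 3)) = -e i j := by
  have h₁ := h.reflect.apply_add_width_add_three_left (-(j + ((m : ℤ) + 3))) (-i)
  rw [show -(-(j + ((m : ℤ) + 3)) + ((m : ℤ) + 3)) = j by ring, neg_neg, neg_neg] at h₁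
  linear_combination h₁

end IsTameFrieze

end

/-- **Periodicity of tame Coxeter frieze patterns.**
A tame Coxeter frieze pattern of width `m` over `ℝ` satisfies
`e (i+(m+3)) (j+(m+3)) = e i j` for all `i j : ℤ`. -/
theorem coxeter_frieze_periodicity (m : ℕ) (e : ℤ → ℤ → ℝ)
    (hb0 : ∀ i : ℤ, e i (i - 2) = 0)
    (hb1 : ∀ i : ℤ, e i (i - 1) = 1)
    (hb2 : ∀ i : ℤ, e i (i + m) = 1)
    (hb3 : ∀ i : ℤ, e i (i + m + 1) = 0)
    (huni : ∀ i j : ℤ,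
      e i j * e (i + 1) (j + 1) - e i (j + 1) * e (i + 1) j = 1)
    (htame : ∀ i j : ℤ,
      Matrix.det (Matrix.of fun r c : Fin 3 =>
        e (i + (r : ℕ)) (j + (c : ℕ))) = 0) :
    ∀ i j : ℤ, e (i + ((m : ℤ) + 3)) (j + ((m : ℤ) + 3)) = e i j := by
  have h : IsTameFrieze m e := ⟨hb0, hb1, hb2, hb3, huni, htame⟩
  intro i j
  rw [h.apply_add_width_add_three_left, h.apply_add_width_add_three_right, neg_neg]
end

section
/- Let m ≥ 0 be an integer and let e be a tame Coxeter frieze pattern of width m over ℝ. Then for every fixed j ∈ ℤ, the sequence V_i := e(j,i) along the j-th South-East diagonal satisfies the linear recurrence V_i = e(i,i)·V_{i-1} − V_{i-2} for all i ∈ ℤ, where the coefficients e(i,i) are the entries of the first row of the frieze. -/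
/-!
Fix the three consecutive columns `i - 2, i - 1, i` of the tiling and read them as sequences
`x, y, z` indexed by the row. By multilinearity, the consecutive `3 × 3` minors of `x, y` and the
residual `r = z - e(i,i) • y + x` still vanish; expanding them along the last column shows that
`r` obeys a three-term recurrence whose outer coefficients are the unimodular `2 × 2` minors of
`x, y`, i.e. `1`. The boundary rows `e(i,i-2) = 0`, `e(i,i-1) = 1` of the frieze make `r`
vanish on the rows `i` and `i + 1`, so `r` vanishes on every row.
-/

section

variable {R : Type*} [CommRing R]

theorem eq_zero_of_three_term_recurrence {f c : ℤ → R}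
    (hrec : ∀ n, f (n + 2) = c n * f (n + 1) - f n) {k : ℤ} (h₀ : f k = 0)
    (h₁ : f (k + 1) = 0) (n : ℤ) : f n = 0 := by
  suffices h : f n = 0 ∧ f (n + 1) = 0 from h.1
  induction n using Int.inductionOn' with
  | b => exact k
  | zero => exact ⟨h₀, h₁⟩
  | succ n _ ih =>
    refine ⟨ih.2, ?_⟩
    rw [add_assoc, one_add_one_eq_two, hrec, ih.1, ih.2, mul_zero, sub_zero]
  | pred n _ ih =>
    refine ⟨?_, by rw [sub_add_cancel]; exact ih.1⟩
    have h := hrec (n - 1)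
    rw [show n - 1 + 2 = n + 1 by ring, show n - 1 + 1 = n by ring, ih.1, ih.2] at h
    linear_combination h

theorem column_eq_combination_of_tame {x y z : ℤ → R}
    (hxy : ∀ n, x n * y (n + 1) - y n * x (n + 1) = 1)
    (htame : ∀ n, !![x n, y n, z n; x (n + 1), y (n + 1), z (n + 1);
      x (n + 2), y (n + 2), z (n + 2)].det = 0)
    {a b : R} {k : ℤ} (h₀ : z k = a * y k + b * x k)
    (h₁ : z (k + 1) = a * y (k + 1) + b * x (k + 1)) (n : ℤ) :
    z n = a * y n + b * x n := by
  set r : ℤ → R := fun n => z n - a * y n - b * x n with hr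
  have hrec (n : ℤ) :
      r (n + 2) = (x n * y (n + 2) - y n * x (n + 2)) * r (n + 1) - r n := by
    have hdet := htame n
    have hxy₁ := hxy (n + 1)
    rw [Matrix.det_fin_three] at hdet
    simp only [Fin.isValue, Matrix.of_apply, Matrix.cons_val', Matrix.cons_val_zero,
      Matrix.cons_val_fin_one, Matrix.cons_val_one, Matrix.cons_val] at hdet
    rw [show n + 1 + 1 = n + 2 by ring] at hxy₁
    simp only [hr]
    linear_combination hdet - r n * hxy₁ - r (n + 2) * hxy n
  have hrn := eq_zero_of_three_term_recurrence hrec (k := k) (by simp [hr, h₀])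
    (by simp [hr, h₁]) n
  simp only [hr] at hrn
  linear_combination hrn

end

theorem coxeter_frieze_diagonal_recurrence_general (e : ℤ → ℤ → ℝ)
    (hb0 : ∀ i : ℤ, e i (i - 2) = 0)
    (hb1 : ∀ i : ℤ, e i (i - 1) = 1)
    (huni : ∀ i j : ℤ,
      e i j * e (i + 1) (j + 1) - e i (j + 1) * e (i + 1) j = 1)
    (htame : ∀ i j : ℤ,
      Matrix.det (Matrix.of fun r c : Fin 3 =>
        e (i + (r : ℕ)) (j + (c : ℕ))) = 0) :
    ∀ j i : ℤ, e j i = e i i * e j (i - 1) - e j (i - 2) := by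
  intro j i
  have hcol₁ : i - 2 + 1 = i - 1 := by ring
  have hcol₂ : i - 2 + 2 = i := by ring
  have hminor (n : ℤ) :
      e n (i - 2) * e (n + 1) (i - 1) - e n (i - 1) * e (n + 1) (i - 2) = 1 := by
    simpa only [hcol₁] using huni n (i - 2)
  have hstrip (n : ℤ) : !![e n (i - 2), e n (i - 1), e n i;
      e (n + 1) (i - 2), e (n + 1) (i - 1), e (n + 1) i;
      e (n + 2) (i - 2), e (n + 2) (i - 1), e (n + 2) i].det = 0 := by
    rw [← htame n (i - 2)]
    congr 1
    ext r c
    fin_cases r <;> fin_cases c <;> simp [hcol₁, hcol₂]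
  have he₁ : e (i + 1) i = 1 := by simpa using hb1 (i + 1)
  have he₀ : e (i + 1) (i - 1) = 0 := by
    simpa [show i + 1 - 2 = i - 1 by ring] using hb0 (i + 1)
  have heneg : e (i + 1) (i - 2) = -1 := by
    linear_combination -(hminor i) + e (i + 1) (i - 1) * hb0 i - e (i + 1) (i - 2) * hb1 i
  have hcol := column_eq_combination_of_tame hminor hstrip (a := e i i) (b := -1) (k := i)
    (by rw [hb0, hb1]; ring) (by rw [he₁, he₀, heneg]; ring) j
  linear_combination hcol

/-- **Linear recurrence along the diagonals of a Coxeter frieze.**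
For a tame Coxeter frieze pattern `e` of width `m` over `ℝ` and any fixed `j`,
the sequence `V i = e j i` along the `j`-th South-East diagonal satisfies
`V i = e i i * V (i-1) - V (i-2)`. -/
theorem coxeter_frieze_diagonal_recurrence (m : ℕ) (e : ℤ → ℤ → ℝ)
    (hb0 : ∀ i : ℤ, e i (i - 2) = 0)
    (hb1 : ∀ i : ℤ, e i (i - 1) = 1)
    (hb2 : ∀ i : ℤ, e i (i + m) = 1)
    (hb3 : ∀ i : ℤ, e i (i + m + 1) = 0)
    (huni : ∀ i j : ℤ,
      e i j * e (i + 1) (j + 1) - e i (j + 1) * e (i + 1) j = 1)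
    (htame : ∀ i j : ℤ,
      Matrix.det (Matrix.of fun r c : Fin 3 =>
        e (i + (r : ℕ)) (j + (c : ℕ))) = 0) :
    ∀ j i : ℤ, e j i = e i i * e j (i - 1) - e j (i - 2) :=
  coxeter_frieze_diagonal_recurrence_general e hb0 hb1 huni htame
end

section
/- Let m ≥ 0 be an integer, let e be a tame Coxeter frieze pattern of width m over ℝ, and set a_k := e(k,k) for k ∈ ℤ (the entries of the first row). Then for all integers i ≤ j, the entry e(i,j) equals the continuant K(a_i,…,a_j), i.e. the determinant of the (j-i+1)×(j-i+1) tridiagonal matrix with diagonal entries a_i,…,a_j and 1's on the sub- and super-diagonal. In particular every entry of the frieze is a polynomial in the entries of the first row. -/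
/-!
Unimodularity of the tiling fixes, on each pair of consecutive rows `i, i+1`, the coefficients
of the linear relation `column (j+2) = c • column (j+1) - column j`, with `c` the 2×2 minor
`skipMinor e i j`; tameness makes the same relation hold on row `i+2`, so this minor does not
depend on `i`. Evaluating it on the boundary rows `i = j+1` gives `c = e (j+2) (j+2)`. Hence every
row satisfies the continuant recurrence `e i (j+2) = a (j+2) * e i (j+1) - e i j` with the
continuant's initial values `e i (i-1) = 1`, `e i i = a i`, while the tridiagonal determinant
satisfies the same recurrence by cofactor expansion along its last row.
-/

/-- The continuant `K(a_i, …, a_j)`: the determinant of the tridiagonal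
`(j-i+1) × (j-i+1)` matrix with diagonal entries `a_i, …, a_j` and `1`'s on the
sub- and super-diagonal.  By convention, for `j = i - 1` (empty range) it is `1`. -/
noncomputable def continuant (a : ℤ → ℝ) (i j : ℤ) : ℝ :=
  Matrix.det (Matrix.of fun r c : Fin (j - i + 1).toNat =>
    if (r : ℕ) = (c : ℕ) then a (i + (r : ℕ))
    else if (r : ℕ) = (c : ℕ) + 1 ∨ (c : ℕ) = (r : ℕ) + 1 then 1 else 0)

theorem Matrix.det_succ_column_of_eq_zero {R : Type*} [CommRing R] {n : ℕ}
    (A : Matrix (Fin n.succ) (Fin n.succ) R) {i j : Fin n.succ} (h : ∀ k ≠ i, A k j = 0) :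
    A.det = (-1) ^ (i + j : ℕ) * A i j * (A.submatrix i.succAbove j.succAbove).det := by
  rw [A.det_succ_column j, Fintype.sum_eq_single i fun k hk => by simp [h k hk]]

section Tridiagonal

variable {R : Type*} [CommRing R]

def tridiagonal (b : ℕ → R) (n : ℕ) : Matrix (Fin n) (Fin n) R :=
  Matrix.of fun r c : Fin n =>
    if (r : ℕ) = c then b r else if (r : ℕ) = c + 1 ∨ (c : ℕ) = r + 1 then 1 else 0

theorem tridiagonal_submatrix_castSucc (b : ℕ → R) (n : ℕ) :
    (tridiagonal b (n + 1)).submatrix Fin.castSucc Fin.castSucc = tridiagonal b n := by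
  ext r c
  simp [tridiagonal]

theorem det_tridiagonal_submatrix_last_castSucc_last (b : ℕ → R) (n : ℕ) :
    ((tridiagonal b (n + 2)).submatrix (Fin.last (n + 1)).succAbove
      (Fin.last n).castSucc.succAbove).det = (tridiagonal b n).det := by
  rw [Matrix.det_succ_column_of_eq_zero _ (i := Fin.last n) (j := Fin.last n)]
  · have hminor : ((tridiagonal b (n + 2)).submatrix (Fin.last (n + 1)).succAbove
        (Fin.last n).castSucc.succAbove).submatrix (Fin.last n).succAbove (Fin.last n).succAbove
        = tridiagonal b n := by
      ext r c
      simp [Fin.succAbove_last, Fin.succAbove_castSucc_of_lt _ _ (Fin.castSucc_lt_last c),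
        tridiagonal]
    rw [hminor]
    simp [tridiagonal, ← two_mul]
  · intro k hk
    have hlt : (k : ℕ) < n := by
      have := Fin.val_ne_of_ne hk
      simp only [Fin.val_last] at this
      omega
    simp only [Matrix.submatrix_apply, Fin.succAbove_last, tridiagonal, Matrix.of_apply]
    rw [if_neg (by simp; omega), if_neg (by simp; omega)]

theorem det_tridiagonal_add_two (b : ℕ → R) (n : ℕ) :
    (tridiagonal b (n + 2)).det =
      b (n + 1) * (tridiagonal b (n + 1)).det - (tridiagonal b n).det := by
  rw [Matrix.det_succ_row _ (Fin.last (n + 1)),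
    Fintype.sum_eq_add (Fin.last (n + 1)) (Fin.last n).castSucc (Fin.ne_of_val_ne (by simp))]
  · rw [det_tridiagonal_submatrix_last_castSucc_last, Fin.succAbove_last,
      tridiagonal_submatrix_castSucc]
    simp [tridiagonal, ← two_mul, sub_eq_add_neg, add_comm]
  · rintro c ⟨hc, hc'⟩
    have hlt : (c : ℕ) < n := by
      have h1 := Fin.val_ne_of_ne hc
      have h2 := Fin.val_ne_of_ne hc'
      simp only [Fin.val_last, Fin.val_castSucc] at h1 h2
      omega
    simp only [tridiagonal, Matrix.of_apply, Fin.val_last]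
    rw [if_neg (by omega), if_neg (by omega)]
    ring

end Tridiagonal

theorem continuant_eq_det_tridiagonal (a : ℤ → ℝ) {i j : ℤ} {n : ℕ}
    (h : (j - i + 1).toNat = n) :
    continuant a i j = (tridiagonal (fun k => a (i + k)) n).det := by
  subst h
  rfl

theorem continuant_sub_one (a : ℤ → ℝ) (i : ℤ) : continuant a i (i - 1) = 1 := by
  rw [continuant_eq_det_tridiagonal a (n := 0) (by omega), Matrix.det_isEmpty]

theorem continuant_self (a : ℤ → ℝ) (i : ℤ) : continuant a i i = a i := by
  rw [continuant_eq_det_tridiagonal a (n := 1) (by omega), Matrix.det_unique]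
  simp [tridiagonal]

theorem continuant_add_two (a : ℤ → ℝ) {i j : ℤ} (h : i - 1 ≤ j) :
    continuant a i (j + 2) = a (j + 2) * continuant a i (j + 1) - continuant a i j := by
  obtain ⟨n, rfl⟩ : ∃ n : ℕ, j = i - 1 + n := ⟨(j - i + 1).toNat, by omega⟩
  rw [continuant_eq_det_tridiagonal a (n := n + 2) (by omega),
    continuant_eq_det_tridiagonal a (n := n + 1) (by omega),
    continuant_eq_det_tridiagonal a (n := n) (by omega), det_tridiagonal_add_two]
  congr 3
  push_cast
  ring

def skipMinor {R : Type*} [CommRing R] (e : ℤ → ℤ → R) (i j : ℤ) : R :=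
  e i j * e (i + 1) (j + 2) - e i (j + 2) * e (i + 1) j

section Frieze

variable {R : Type*} [CommRing R] {e : ℤ → ℤ → R}

variable (huni : ∀ i j : ℤ, e i j * e (i + 1) (j + 1) - e i (j + 1) * e (i + 1) j = 1)
include huni

theorem eq_skipMinor_mul_sub (i j : ℤ) :
    e i (j + 2) = skipMinor e i j * e i (j + 1) - e i j := by
  have h := huni i (j + 1)
  rw [add_assoc, one_add_one_eq_two] at h
  unfold skipMinor
  linear_combination (-e i j) * h - e i (j + 2) * huni i j

theorem succ_eq_skipMinor_mul_sub (i j : ℤ) :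
    e (i + 1) (j + 2) = skipMinor e i j * e (i + 1) (j + 1) - e (i + 1) j := by
  have h := huni i (j + 1)
  rw [add_assoc, one_add_one_eq_two] at h
  unfold skipMinor
  linear_combination (-e (i + 1) (j + 2)) * huni i j - e (i + 1) j * h

theorem add_two_eq_skipMinor_mul_sub_of_det_eq_zero {i j : ℤ}
    (htame : Matrix.det (Matrix.of fun r c : Fin 3 => e (i + (r : ℕ)) (j + (c : ℕ))) = 0) :
    e (i + 2) (j + 2) = skipMinor e i j * e (i + 2) (j + 1) - e (i + 2) j := by
  simp only [Matrix.det_fin_three, Matrix.of_apply, Fin.val_zero, Fin.val_one, Fin.val_two,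
    Nat.cast_zero, Nat.cast_one, Nat.cast_ofNat, add_zero] at htame
  have h0 := eq_skipMinor_mul_sub huni i j
  have h1 := succ_eq_skipMinor_mul_sub huni i j
  -- The column operation `col 2 ↦ col 2 - c • col 1 + col 0` (with `c = skipMinor e i j`)
  -- kills rows `i, i+1` of the last column by `h0, h1`, so the determinant is the remaining
  -- entry times the unimodular corner minor.
  linear_combination htame
    - (e (i + 1) j * e (i + 2) (j + 1) - e (i + 1) (j + 1) * e (i + 2) j) * h0
    + (e i j * e (i + 2) (j + 1) - e i (j + 1) * e (i + 2) j) * h1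
    - (e (i + 2) (j + 2) - skipMinor e i j * e (i + 2) (j + 1) + e (i + 2) j) * huni i j

theorem skipMinor_succ {i j : ℤ}
    (htame : Matrix.det (Matrix.of fun r c : Fin 3 => e (i + (r : ℕ)) (j + (c : ℕ))) = 0) :
    skipMinor e (i + 1) j = skipMinor e i j := by
  have h1 := succ_eq_skipMinor_mul_sub huni i j
  have h2 := add_two_eq_skipMinor_mul_sub_of_det_eq_zero huni htame
  have hu := huni (i + 1) j
  rw [add_assoc i 1 1, one_add_one_eq_two] at hu
  rw [skipMinor, add_assoc i 1 1, one_add_one_eq_two]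
  linear_combination e (i + 1) j * h2 - e (i + 2) j * h1 + skipMinor e i j * hu

theorem skipMinor_eq_diag
    (htame : ∀ i j : ℤ,
      Matrix.det (Matrix.of fun r c : Fin 3 => e (i + (r : ℕ)) (j + (c : ℕ))) = 0)
    (hb0 : ∀ i : ℤ, e i (i - 2) = 0) (hb1 : ∀ i : ℤ, e i (i - 1) = 1) (i j : ℤ) :
    skipMinor e i j = e (j + 2) (j + 2) := by
  have hperiodic : Function.Periodic (skipMinor e · j) 1 := fun i =>
    skipMinor_succ huni (htame i j)
  have h := hperiodic.sub_int_mul_eq (x := j + 1) (j + 1 - i)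
  simp only [Int.cast_id, mul_one, sub_sub_cancel] at h
  rw [h, skipMinor, add_assoc, one_add_one_eq_two]
  have h1 := hb1 (j + 1)
  have h0 := hb0 (j + 2)
  simp only [add_sub_cancel_right] at h1 h0
  rw [h1, h0]
  ring

theorem eq_diag_mul_sub
    (htame : ∀ i j : ℤ,
      Matrix.det (Matrix.of fun r c : Fin 3 => e (i + (r : ℕ)) (j + (c : ℕ))) = 0)
    (hb0 : ∀ i : ℤ, e i (i - 2) = 0) (hb1 : ∀ i : ℤ, e i (i - 1) = 1) (i j : ℤ) :
    e i (j + 2) = e (j + 2) (j + 2) * e i (j + 1) - e i j := by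
  rw [eq_skipMinor_mul_sub huni, skipMinor_eq_diag huni htame hb0 hb1]

end Frieze

theorem coxeter_frieze_entries_eq_continuant_general (e : ℤ → ℤ → ℝ)
    (hb0 : ∀ i : ℤ, e i (i - 2) = 0)
    (hb1 : ∀ i : ℤ, e i (i - 1) = 1)
    (huni : ∀ i j : ℤ,
      e i j * e (i + 1) (j + 1) - e i (j + 1) * e (i + 1) j = 1)
    (htame : ∀ i j : ℤ,
      Matrix.det (Matrix.of fun r c : Fin 3 =>
        e (i + (r : ℕ)) (j + (c : ℕ))) = 0) :
    ∀ i j : ℤ, i ≤ j → e i j = continuant (fun k => e k k) i j := by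
  intro i
  have key : ∀ j, i ≤ j → e i (j - 1) = continuant (fun k => e k k) i (j - 1) ∧
      e i j = continuant (fun k => e k k) i j := by
    refine Int.leInduction ⟨by rw [hb1, continuant_sub_one], by rw [continuant_self]⟩ ?_
    rintro j hij ⟨hprev, hcur⟩
    refine ⟨by rwa [add_sub_cancel_right], ?_⟩
    have hrow := eq_diag_mul_sub huni htame hb0 hb1 i (j - 1)
    have hcont := continuant_add_two (fun k => e k k) (i := i) (j := j - 1) (by omega)
    rw [show j - 1 + 2 = j + 1 by ring, sub_add_cancel] at hrow hcont
    rw [hrow, hcont, hcur, hprev]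
  exact fun j hij => (key j hij).2

/-- **Entries of a Coxeter frieze are continuants in the first row.**
For a tame Coxeter frieze pattern `e` of width `m` over `ℝ`, with first row
`a k = e k k`, one has `e i j = K(a_i, …, a_j)` for all `i ≤ j`. -/
theorem coxeter_frieze_entries_eq_continuant (m : ℕ) (e : ℤ → ℤ → ℝ)
    (hb0 : ∀ i : ℤ, e i (i - 2) = 0)
    (hb1 : ∀ i : ℤ, e i (i - 1) = 1)
    (hb2 : ∀ i : ℤ, e i (i + m) = 1)
    (hb3 : ∀ i : ℤ, e i (i + m + 1) = 0)
    (huni : ∀ i j : ℤ,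
      e i j * e (i + 1) (j + 1) - e i (j + 1) * e (i + 1) j = 1)
    (htame : ∀ i j : ℤ,
      Matrix.det (Matrix.of fun r c : Fin 3 =>
        e (i + (r : ℕ)) (j + (c : ℕ))) = 0) :
    ∀ i j : ℤ, i ≤ j → e i j = continuant (fun k => e k k) i j :=
  coxeter_frieze_entries_eq_continuant_general e hb0 hb1 huni htame
end

section
/- Let m ≥ 0 be an integer, n := m+3, and a : ℤ → ℝ a sequence. Then the frieze determined by a is closed of width m (i.e. K(a_i,…,a_{i+m}) = 1 and K(a_i,…,a_{i+m+1}) = 0 for all i ∈ ℤ) if and only if the second-order difference equation V_i = a_i·V_{i-1} − V_{i-2} is n-superperiodic, that is: a_{i+n} = a_i for all i, and every sequence V : ℤ → ℝ satisfying V_i = a_i·V_{i-1} − V_{i-2} for all i ∈ ℤ also satisfies V_{i+n} = −V_i for all i ∈ ℤ. -/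
section

variable {R : Type*} [CommRing R]

def tridiag (a : ℤ → R) (i : ℤ) (n : ℕ) : Matrix (Fin n) (Fin n) R :=
  Matrix.of fun r c =>
    if (r : ℕ) = (c : ℕ) then a (i + (r : ℕ))
    else if (r : ℕ) = (c : ℕ) + 1 ∨ (c : ℕ) = (r : ℕ) + 1 then 1 else 0

/-- `continuantFrom a i k = K(a_i, …, a_{i+k-1})`. -/
def continuantFrom (a : ℤ → R) (i : ℤ) (k : ℕ) : R :=
  (tridiag a i k).det

theorem continuant_add (a : ℤ → ℝ) (i : ℤ) (k : ℕ) :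
    continuant a i (i + k) = continuantFrom a i (k + 1) := by
  rw [continuant, continuantFrom, show (i + k - i + 1).toNat = k + 1 by omega]
  rfl

theorem tridiag_submatrix_succ (a : ℤ → R) (i : ℤ) (n : ℕ) :
    (tridiag a i (n + 1)).submatrix Fin.succ Fin.succ = tridiag a (i + 1) n := by
  ext r c
  simp [tridiag, add_assoc, add_comm (1 : ℤ)]

theorem tridiag_apply_eq_zero (a : ℤ → R) (i : ℤ) {n : ℕ} {r c : Fin n}
    (h : (r : ℕ) + 1 < c ∨ (c : ℕ) + 1 < r) : tridiag a i n r c = 0 := by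
  simp only [tridiag, Matrix.of_apply]
  rw [if_neg (by omega), if_neg (by omega)]

theorem continuantFrom_zero (a : ℤ → R) (i : ℤ) : continuantFrom a i 0 = 1 :=
  Matrix.det_fin_zero

theorem continuantFrom_one (a : ℤ → R) (i : ℤ) : continuantFrom a i 1 = a i := by
  simp [continuantFrom, tridiag]

theorem det_tridiag_submatrix_succ_succAbove_one (a : ℤ → R) (i : ℤ) (n : ℕ) :
    ((tridiag a i (n + 2)).submatrix Fin.succ (Fin.succAbove 1)).det =
      continuantFrom a (i + 2) n := by
  have hcols : Fin.succAbove 1 ∘ Fin.succ = (Fin.succ ∘ Fin.succ : Fin n → Fin (n + 2)) := by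
    ext c
    simp [Fin.succAbove, Fin.lt_def]
  have hminor : ((tridiag a i (n + 2)).submatrix Fin.succ (Fin.succAbove 1)).submatrix
      Fin.succ Fin.succ = tridiag a (i + 2) n := by
    rw [Matrix.submatrix_submatrix, hcols, ← Matrix.submatrix_submatrix, tridiag_submatrix_succ,
      tridiag_submatrix_succ, add_assoc, one_add_one_eq_two]
  -- the first column of this minor is `(1, 0, …, 0)`
  rw [Matrix.det_succ_column_zero, Fin.sum_univ_succ, Finset.sum_eq_zero fun r _ => by
    rw [Matrix.submatrix_apply, tridiag_apply_eq_zero _ _ (by simp), mul_zero, zero_mul]]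
  rw [Fin.succAbove_zero, hminor, add_zero, continuantFrom]
  simp [tridiag]

theorem continuantFrom_add_two (a : ℤ → R) (i : ℤ) (n : ℕ) :
    continuantFrom a i (n + 2) =
      a i * continuantFrom a (i + 1) (n + 1) - continuantFrom a (i + 2) n := by
  have h00 : tridiag a i (n + 2) 0 0 = a i := by simp [tridiag]
  have h01 : tridiag a i (n + 2) 0 1 = 1 := by simp [tridiag]
  rw [continuantFrom, Matrix.det_succ_row_zero, Fin.sum_univ_succ, Fin.sum_univ_succ,
    Finset.sum_eq_zero fun c _ => by rw [tridiag_apply_eq_zero _ _ (by simp), mul_zero, zero_mul]]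
  simp [det_tridiag_submatrix_succ_succAbove_one, tridiag_submatrix_succ, continuantFrom, h00, h01,
    sub_eq_add_neg]

def IsHillSolution (a V : ℤ → R) : Prop :=
  ∀ i, V i = a i * V (i - 1) - V (i - 2)

/-- The solution with `V (i - 2) = x` and `V (i - 1) = y`; the recursion runs outwards from
`i - 3/2`. -/
def hillSolution (a : ℤ → R) (i : ℤ) (x y : R) (j : ℤ) : R :=
  if j = i - 2 then x
  else if j = i - 1 then y
  else if i - 1 < j then a j * hillSolution a i x y (j - 1) - hillSolution a i x y (j - 2)
  else a (j + 2) * hillSolution a i x y (j + 1) - hillSolution a i x y (j + 2)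
termination_by (2 * (j - i) + 3).natAbs
decreasing_by all_goals omega

section
variable (a : ℤ → R) (i : ℤ) (x y : R)

theorem hillSolution_sub_two : hillSolution a i x y (i - 2) = x := by
  rw [hillSolution, if_pos rfl]

theorem hillSolution_sub_one : hillSolution a i x y (i - 1) = y := by
  rw [hillSolution, if_neg (by omega), if_pos rfl]

theorem isHillSolution_hillSolution : IsHillSolution a (hillSolution a i x y) := by
  intro j
  rcases lt_or_ge (i - 1) j with h | h
  · rw [hillSolution, if_neg (by omega), if_neg (by omega), if_pos h]
  · rw [hillSolution.eq_1 a i x y (j - 2), if_neg (by omega), if_neg (by omega), if_neg (by omega),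
      sub_add_cancel, show j - 2 + 1 = j - 1 by ring]
    ring

end

theorem IsHillSolution.eq_continuantFrom {a V : ℤ → R} (hV : IsHillSolution a V) (i : ℤ)
    (k : ℕ) :
    V (i + k) =
      continuantFrom a i (k + 1) * V (i - 1) - continuantFrom a (i + 1) k * V (i - 2) := by
  induction k generalizing i with
  | zero => simp [continuantFrom_one, continuantFrom_zero, hV i]
  | succ k ih =>
    have h := ih (i + 1)
    rw [add_sub_cancel_right, show i + 1 - 2 = i - 1 by ring, hV i,
      show i + 1 + 1 = i + 2 by ring] at h
    rw [continuantFrom_add_two, show i + ((k + 1 : ℕ) : ℤ) = i + 1 + k by omega, h]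
    ring

theorem hillSolution_zero_one_eq_continuantFrom (a : ℤ → R) (i : ℤ) (k : ℕ) :
    hillSolution a i 0 1 (i + k) = continuantFrom a i (k + 1) := by
  rw [(isHillSolution_hillSolution a i 0 1).eq_continuantFrom, hillSolution_sub_two,
    hillSolution_sub_one]
  ring

theorem periodic_of_forall_antiperiodic {a : ℤ → R} {n : ℤ}
    (h : ∀ V, IsHillSolution a V → ∀ i, V (i + n) = -V i) (i : ℤ) : a (i + n) = a i := by
  set V := hillSolution a i 0 1
  have hV : IsHillSolution a V := isHillSolution_hillSolution a i 0 1
  have h0 : V (i - 2) = 0 := hillSolution_sub_two ..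
  have h1 : V (i - 1) = 1 := hillSolution_sub_one ..
  have hshift := hV (i + n)
  rw [h V hV, show i + n - 1 = i - 1 + n by ring, h V hV, show i + n - 2 = i - 2 + n by ring,
    h V hV, h0, h1] at hshift
  have hi := hV i
  rw [h0, h1] at hi
  linear_combination hshift + hi

theorem IsHillSolution.antiperiodic_of_closed {a V : ℤ → R} {m : ℕ}
    (h1 : ∀ i, continuantFrom a i (m + 1) = 1) (h2 : ∀ i, continuantFrom a i (m + 2) = 0)
    (hV : IsHillSolution a V) (i : ℤ) : V (i + (m + 3)) = -V i := by
  have h3 : continuantFrom a (i + 1) (m + 2 + 1) = -1 := by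
    rw [continuantFrom_add_two, h1, h2]
    ring
  rw [show i + ((m : ℤ) + 3) = i + 1 + ((m + 2 : ℕ) : ℤ) by push_cast; ring,
    hV.eq_continuantFrom, h3, h2, add_sub_cancel_right]
  ring

theorem closed_of_forall_antiperiodic {a : ℤ → R} {m : ℕ}
    (h : ∀ V, IsHillSolution a V → ∀ i, V (i + (m + 3)) = -V i) (i : ℤ) :
    continuantFrom a i (m + 1) = 1 ∧ continuantFrom a i (m + 2) = 0 := by
  set V := hillSolution a i 0 1
  have hV : IsHillSolution a V := isHillSolution_hillSolution a i 0 1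
  have hK : ∀ k : ℕ, V (i + k) = continuantFrom a i (k + 1) :=
    hillSolution_zero_one_eq_continuantFrom a i
  have h0 : V (i - 2) = 0 := hillSolution_sub_two ..
  have h1 : V (i - 1) = 1 := hillSolution_sub_one ..
  have h3 : V (i - 3) = -1 := by
    have := hV (i - 1)
    rw [h1, show i - 1 - 1 = i - 2 by ring, show i - 1 - 2 = i - 3 by ring, h0] at this
    linear_combination this
  constructor
  · rw [← hK m, show i + (m : ℤ) = i - 3 + (m + 3) by ring, h V hV, h3, neg_neg]
  · rw [← hK (m + 1), show i + ((m + 1 : ℕ) : ℤ) = i - 2 + (m + 3) by push_cast; ring,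
      h V hV, h0, neg_zero]

end

/-- **Closed friezes of width `m` correspond to `(m+3)`-superperiodic equations.**
The frieze determined by `a : ℤ → ℝ` is closed of width `m` if and only if the
difference equation `V i = a i * V (i-1) - V (i-2)` is `(m+3)`-superperiodic:
the coefficients are `(m+3)`-periodic and every solution is `(m+3)`-antiperiodic. -/
theorem frieze_closed_iff_superperiodic (m : ℕ) (a : ℤ → ℝ) :
    ((∀ i : ℤ, continuant a i (i + (m : ℤ)) = 1) ∧
     (∀ i : ℤ, continuant a i (i + (m : ℤ) + 1) = 0)) ↔
    ((∀ i : ℤ, a (i + ((m : ℤ) + 3)) = a i) ∧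
     (∀ V : ℤ → ℝ, (∀ i : ℤ, V i = a i * V (i - 1) - V (i - 2)) →
        ∀ i : ℤ, V (i + ((m : ℤ) + 3)) = -V i)) := by
  simp only [add_assoc _ (m : ℤ) 1, ← Nat.cast_add_one, continuant_add]
  constructor
  · rintro ⟨h1, h2⟩
    have anti : ∀ V, IsHillSolution a V → ∀ i, V (i + (m + 3)) = -V i :=
      fun V hV => hV.antiperiodic_of_closed h1 h2
    exact ⟨periodic_of_forall_antiperiodic anti, anti⟩
  · rintro ⟨-, anti⟩
    exact ⟨fun i => (closed_of_forall_antiperiodic anti i).1,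
      fun i => (closed_of_forall_antiperiodic anti i).2⟩
end

section
/- Let n ≥ 1 be an odd integer and let p : ℤ → ℙ(ℂ²) be a sequence of points of the complex projective line such that p_{i+n} = p_i for all i and p_i ≠ p_{i+1} for all i. Then there exists a sequence V : ℤ → ℂ² with: V_i ≠ 0 and the projective class of V_i equals p_i for all i; V_{i+n} = −V_i for all i; and det(V_{i+1}, V_i) = 1 for all i, where det(U,W) := U₁W₂ − U₂W₁. Moreover this lift is unique up to an overall sign: if W : ℤ → ℂ² also has these three properties, then either W_i = V_i for all i or W_i = −V_i for all i. -/
/-!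
Write `wedge u v` for det(u, v). Distinct consecutive points have representatives with nonzero
`wedge`, so rescaling the representatives along ℤ (a first-order recursion run in both
directions) gives a lift with `wedge (V (i + 1)) (V i) = 1`. Two such lifts differ by scalars
with `μ (i + 1) * μ i = 1`, so `μ` alternates between `μ 0` and `(μ 0)⁻¹`; in particular such a
lift is determined by `V 0`. Periodicity of `p` gives `V n = c • V 0`; since `n` is odd, rescaling
by the alternating sequence `l, l⁻¹, l, …` with `l ^ 2 = -c` turns `c` into `-1`, and then
`V (· + n)` and `-V` are lifts agreeing at `0`, hence equal. For uniqueness, two antiperiodic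
lifts have `μ n = μ 0`, while `n` odd gives `μ n = (μ 0)⁻¹`; so `μ` is the constant `1` or `-1`.
-/

open Projectivization
open scoped LinearAlgebra.Projectivization

theorem exists_seq_apply_add_one_eq {α : Type*} (f : ℤ → α ≃ α) (a : α) :
    ∃ x : ℤ → α, x 0 = a ∧ ∀ i, x (i + 1) = f i (x i) := by
  refine ⟨fun i => i.inductionOn' 0 a (fun k _ y => f k y) (fun k _ y => (f (k - 1)).symm y),
    Int.inductionOn'_self, fun i => ?_⟩
  rcases le_or_gt 0 i with hi | hi
  · exact Int.inductionOn'_add_one hi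
  · have h := Int.inductionOn'_sub_one (motive := fun _ => α) (zero := a)
      (succ := fun k _ y => f k y) (pred := fun k _ y => (f (k - 1)).symm y)
      (show i + 1 ≤ 0 by omega)
    simp only [add_sub_cancel_right] at h
    dsimp only
    rw [h, Equiv.apply_symm_apply]

section Alternating

variable {G : Type*} [InvolutiveInv G] {μ : ℤ → G}

theorem periodic_two_of_apply_add_one_eq_inv (hμ : ∀ i, μ (i + 1) = (μ i)⁻¹) :
    Function.Periodic μ 2 := fun i => by
  rw [show i + 2 = i + 1 + 1 by ring, hμ, hμ, inv_inv]

theorem apply_add_odd_eq_inv (hμ : ∀ i, μ (i + 1) = (μ i)⁻¹) {n : ℤ} (hn : Odd n) (i : ℤ) :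
    μ (i + n) = (μ i)⁻¹ := by
  obtain ⟨k, rfl⟩ := hn
  rw [← hμ, show i + (2 * k + 1) = i + 1 + k • 2 by simp only [smul_eq_mul]; ring,
    (periodic_two_of_apply_add_one_eq_inv hμ).zsmul k]

theorem apply_eq_apply_zero_of_inv_eq (hμ : ∀ i, μ (i + 1) = (μ i)⁻¹) (h0 : (μ 0)⁻¹ = μ 0)
    (i : ℤ) : μ i = μ 0 := by
  rcases Int.even_or_odd i with ⟨k, rfl⟩ | hi
  · rw [← two_mul, mul_comm, ← smul_eq_mul, (periodic_two_of_apply_add_one_eq_inv hμ).zsmul_eq]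
  · rw [← zero_add i, apply_add_odd_eq_inv hμ hi, h0]

end Alternating

variable {K : Type*} [Field K]

def wedge (u v : K × K) : K := u.1 * v.2 - u.2 * v.1

theorem wedge_smul_smul (a b : K) (u v : K × K) : wedge (a • u) (b • v) = a * b * wedge u v := by
  simp only [wedge, Prod.smul_fst, Prod.smul_snd, smul_eq_mul]
  ring

theorem mk_eq_mk_of_wedge_eq_zero {u v : K × K} (hu : u ≠ 0) (hv : v ≠ 0) (h : wedge u v = 0) :
    mk K u hu = mk K v hv := by
  rw [wedge] at h
  rw [mk_eq_mk_iff']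
  obtain h₁ | h₂ : v.1 ≠ 0 ∨ v.2 ≠ 0 := by
    by_contra! h₀
    exact hv (Prod.ext h₀.1 h₀.2)
  · refine ⟨u.1 / v.1, Prod.ext ?_ ?_⟩ <;> simp only [Prod.smul_fst, Prod.smul_snd, smul_eq_mul]
    · field_simp
    · field_simp
      linear_combination h
  · refine ⟨u.2 / v.2, Prod.ext ?_ ?_⟩ <;> simp only [Prod.smul_fst, Prod.smul_snd, smul_eq_mul]
    · field_simp
      linear_combination -h
    · field_simp

theorem units_smul_left_injective {M : Type*} [AddCommGroup M] [Module K M] {v : M} (hv : v ≠ 0) :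
    Function.Injective fun a : Kˣ => a • v :=
  fun _ _ h => Units.ext (smul_left_injective K hv h)

def IsLift (p : ℤ → ℙ K (K × K)) (V : ℤ → K × K) : Prop :=
  ∀ i, ∃ h : V i ≠ 0, mk K (V i) h = p i

theorem isLift_rep (p : ℤ → ℙ K (K × K)) : IsLift p fun i => (p i).rep :=
  fun i => ⟨(p i).rep_nonzero, (p i).mk_rep⟩

theorem IsLift.units_smul {p : ℤ → ℙ K (K × K)} {V : ℤ → K × K} (hV : IsLift p V) (c : ℤ → Kˣ) :
    IsLift p fun i => c i • V i := fun i => by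
  obtain ⟨hVi, hp⟩ := hV i
  refine ⟨(smul_ne_zero_iff_ne (c i)).mpr hVi, ?_⟩
  rw [← hp, mk_eq_mk_iff]
  exact ⟨c i, rfl⟩

structure IsUnimodularLift (p : ℤ → ℙ K (K × K)) (V : ℤ → K × K) : Prop where
  isLift : IsLift p V
  wedge_eq_one : ∀ i, wedge (V (i + 1)) (V i) = 1

namespace IsUnimodularLift

variable {p : ℤ → ℙ K (K × K)} {V W : ℤ → K × K}

theorem ne_zero (hV : IsUnimodularLift p V) (i : ℤ) : V i ≠ 0 := (hV.isLift i).1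

theorem mk_eq (hV : IsUnimodularLift p V) (i : ℤ) : Projectivization.mk K (V i) (hV.ne_zero i) = p i :=
  (hV.isLift i).2

theorem units_smul (hV : IsUnimodularLift p V) {c : ℤ → Kˣ} (hc : ∀ i, c (i + 1) = (c i)⁻¹) :
    IsUnimodularLift p fun i => c i • V i where
  isLift := hV.isLift.units_smul c
  wedge_eq_one i := by
    rw [Units.smul_def, Units.smul_def, wedge_smul_smul, hV.wedge_eq_one i, hc, mul_one,
      Units.inv_mul]

theorem neg (hV : IsUnimodularLift p V) : IsUnimodularLift p (-V) := by
  have h := hV.units_smul (c := fun _ => -1) (by simp)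
  simp only [Units.neg_smul, one_smul] at h
  exact h

theorem comp_add {n : ℤ} (hV : IsUnimodularLift p V) (hp : Function.Periodic p n) :
    IsUnimodularLift p fun i => V (i + n) where
  isLift i := hp i ▸ hV.isLift (i + n)
  wedge_eq_one i := by simpa only [add_right_comm i n 1] using hV.wedge_eq_one (i + n)

theorem exists_units_smul_eq (hV : IsUnimodularLift p V) (hW : IsUnimodularLift p W) :
    ∃ μ : ℤ → Kˣ, (∀ i, W i = μ i • V i) ∧ ∀ i, μ (i + 1) = (μ i)⁻¹ := by
  have h : ∀ i, ∃ a : Kˣ, a • V i = W i := fun i =>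
    (mk_eq_mk_iff K _ _ (hW.ne_zero i) (hV.ne_zero i)).mp ((hW.mk_eq i).trans (hV.mk_eq i).symm)
  choose μ hμ using h
  refine ⟨μ, fun i => (hμ i).symm, fun i => eq_inv_of_mul_eq_one_left (Units.ext ?_)⟩
  have hWi := hW.wedge_eq_one i
  rwa [← hμ, ← hμ, Units.smul_def, Units.smul_def, wedge_smul_smul, hV.wedge_eq_one i,
    mul_one] at hWi

theorem eq_of_apply_zero_eq (hV : IsUnimodularLift p V) (hW : IsUnimodularLift p W)
    (h0 : W 0 = V 0) : W = V := by
  obtain ⟨μ, hWV, hμ⟩ := hV.exists_units_smul_eq hW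
  have hμ0 : μ 0 = 1 := units_smul_left_injective (hV.ne_zero 0) <| by
    simp only [← hWV, h0, one_smul]
  funext i
  rw [hWV, apply_eq_apply_zero_of_inv_eq hμ (by rw [hμ0, inv_one]) i, hμ0, one_smul]

theorem eq_or_eq_neg_of_antiperiodic (hV : IsUnimodularLift p V) (hW : IsUnimodularLift p W)
    {n : ℤ} (hn : Odd n) (hVn : Function.Antiperiodic V n) (hWn : Function.Antiperiodic W n) :
    W = V ∨ W = -V := by
  obtain ⟨μ, hWV, hμ⟩ := hV.exists_units_smul_eq hW
  have hμn : μ n = μ 0 := units_smul_left_injective (hV.ne_zero n) <| by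
    have hWn0 := hWn 0
    have hVn0 := hVn 0
    rw [zero_add] at hWn0 hVn0
    change μ n • V n = μ 0 • V n
    rw [← hWV, hVn0, smul_neg, ← hWV, hWn0]
  have hμ0 : (μ 0)⁻¹ = μ 0 := by rw [← apply_add_odd_eq_inv hμ hn, zero_add, hμn]
  have hsq : (μ 0 : K) * μ 0 = 1 := by
    rw [← Units.val_mul, inv_eq_iff_mul_eq_one.mp hμ0, Units.val_one]
  have hconst := apply_eq_apply_zero_of_inv_eq hμ hμ0
  rcases mul_self_eq_one_iff.mp hsq with h | h
  · left
    funext i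
    rw [hWV, hconst, Units.smul_def, h, one_smul]
  · right
    funext i
    rw [hWV, hconst, Units.smul_def, h, neg_one_smul]
    rfl

end IsUnimodularLift

theorem exists_isUnimodularLift {p : ℤ → ℙ K (K × K)} (hne : ∀ i, p i ≠ p (i + 1)) :
    ∃ V, IsUnimodularLift p V := by
  have hd : ∀ i, wedge (p (i + 1)).rep (p i).rep ≠ 0 := fun i h => hne i <| by
    simpa only [mk_rep] using (mk_eq_mk_of_wedge_eq_zero (rep_nonzero _) (rep_nonzero _) h).symm
  obtain ⟨a, -, ha⟩ := exists_seq_apply_add_one_eq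
    (fun i => (Equiv.mulRight (Units.mk0 _ (hd i))).trans (Equiv.inv Kˣ)) 1
  refine ⟨fun i => a i • (p i).rep, (isLift_rep p).units_smul a, fun i => ?_⟩
  have h : a (i + 1) * a i * Units.mk0 _ (hd i) = 1 := by
    simp only [ha, Equiv.trans_apply, Equiv.coe_mulRight, Equiv.inv_apply]
    group
  simpa only [Units.smul_def, wedge_smul_smul, Units.val_mul, Units.val_mk0, Units.val_one]
    using congrArg Units.val h

theorem exists_isUnimodularLift_antiperiodic [IsAlgClosed K] {p : ℤ → ℙ K (K × K)} {n : ℤ}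
    (hn : Odd n) (hp : Function.Periodic p n) (hne : ∀ i, p i ≠ p (i + 1)) :
    ∃ V, IsUnimodularLift p V ∧ Function.Antiperiodic V n := by
  obtain ⟨V₁, hV₁⟩ := exists_isUnimodularLift hne
  obtain ⟨c, hc⟩ : ∃ c : Kˣ, c • V₁ 0 = V₁ n := by
    refine (mk_eq_mk_iff K _ _ (hV₁.ne_zero n) (hV₁.ne_zero 0)).mp ?_
    rw [hV₁.mk_eq, hV₁.mk_eq, ← hp 0, zero_add]
  obtain ⟨l, hl⟩ : ∃ l : Kˣ, l ^ 2 = -c := by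
    obtain ⟨x, hx⟩ := IsAlgClosed.exists_pow_nat_eq (-(c : K)) two_pos
    have hx0 : x ≠ 0 := by
      rintro rfl
      simp at hx
    exact ⟨Units.mk0 x hx0, Units.ext (by simpa using hx)⟩
  obtain ⟨s, hs0, hs⟩ := exists_seq_apply_add_one_eq (fun _ => Equiv.inv Kˣ) l
  have hV := hV₁.units_smul hs
  refine ⟨_, hV, fun i => congrFun (hV.neg.eq_of_apply_zero_eq (hV.comp_add hp) ?_) i⟩
  have hsn := apply_add_odd_eq_inv hs hn 0
  rw [zero_add] at hsn
  simp only [zero_add, Pi.neg_apply, hsn, hs0, ← hc, smul_smul, ← Units.neg_smul]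
  rw [← neg_neg c, ← hl, mul_neg, pow_two, inv_mul_cancel_left]

theorem lift_of_periodic_projective_points_general (n : ℤ) (hodd : Odd n)
    (p : ℤ → Projectivization ℂ (ℂ × ℂ))
    (hper : ∀ i : ℤ, p (i + n) = p i)
    (hne : ∀ i : ℤ, p i ≠ p (i + 1)) :
    ∃ (V : ℤ → ℂ × ℂ) (hV : ∀ i : ℤ, V i ≠ 0),
      (∀ i : ℤ, Projectivization.mk ℂ (V i) (hV i) = p i) ∧
      (∀ i : ℤ, V (i + n) = -V i) ∧
      (∀ i : ℤ, (V (i + 1)).1 * (V i).2 - (V (i + 1)).2 * (V i).1 = 1) ∧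
      (∀ (W : ℤ → ℂ × ℂ) (hW : ∀ i : ℤ, W i ≠ 0),
        (∀ i : ℤ, Projectivization.mk ℂ (W i) (hW i) = p i) →
        (∀ i : ℤ, W (i + n) = -W i) →
        (∀ i : ℤ, (W (i + 1)).1 * (W i).2 - (W (i + 1)).2 * (W i).1 = 1) →
        ((∀ i : ℤ, W i = V i) ∨ (∀ i : ℤ, W i = -V i))) := by
  obtain ⟨V, hV, hVn⟩ := exists_isUnimodularLift_antiperiodic hodd hper hne
  refine ⟨V, hV.ne_zero, hV.mk_eq, hVn, hV.wedge_eq_one, fun W hW hWp hWn hWdet => ?_⟩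
  have hWlift : IsUnimodularLift p W := ⟨fun i => ⟨hW i, hWp i⟩, hWdet⟩
  rcases hV.eq_or_eq_neg_of_antiperiodic hWlift hodd hVn hWn with rfl | rfl
  · exact Or.inl fun _ => rfl
  · exact Or.inr fun _ => rfl

/-- **Existence and uniqueness (up to sign) of the lift of an `n`-periodic sequence
of points of `ℙ¹(ℂ)` for odd `n`.**
If `n ≥ 1` is odd and `p : ℤ → ℙ(ℂ²)` satisfies `p (i+n) = p i` and `p i ≠ p (i+1)`,
then there is a lift `V : ℤ → ℂ²` of `p` with `V (i+n) = -V i` and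
`det (V (i+1), V i) = 1` for all `i`, and such a lift is unique up to a global sign. -/
theorem lift_of_periodic_projective_points (n : ℤ) (hn1 : 1 ≤ n) (hodd : Odd n)
    (p : ℤ → Projectivization ℂ (ℂ × ℂ))
    (hper : ∀ i : ℤ, p (i + n) = p i)
    (hne : ∀ i : ℤ, p i ≠ p (i + 1)) :
    ∃ (V : ℤ → ℂ × ℂ) (hV : ∀ i : ℤ, V i ≠ 0),
      (∀ i : ℤ, Projectivization.mk ℂ (V i) (hV i) = p i) ∧
      (∀ i : ℤ, V (i + n) = -V i) ∧
      (∀ i : ℤ, (V (i + 1)).1 * (V i).2 - (V (i + 1)).2 * (V i).1 = 1) ∧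
      (∀ (W : ℤ → ℂ × ℂ) (hW : ∀ i : ℤ, W i ≠ 0),
        (∀ i : ℤ, Projectivization.mk ℂ (W i) (hW i) = p i) →
        (∀ i : ℤ, W (i + n) = -W i) →
        (∀ i : ℤ, (W (i + 1)).1 * (W i).2 - (W (i + 1)).2 * (W i).1 = 1) →
        ((∀ i : ℤ, W i = V i) ∨ (∀ i : ℤ, W i = -V i))) :=
  lift_of_periodic_projective_points_general n hodd p hper hne
end

section
/- Let V : ℤ → ℝ² be a sequence of vectors with det(V_{j+1}, V_j) = 1 for all j ∈ ℤ, where det(U,W) := U₁W₂ − U₂W₁. Fix i ∈ ℤ and assume the second coordinates of V_{i-3}, V_{i-2}, V_{i-1}, V_i are all nonzero; set p_j := (first coordinate of V_j)/(second coordinate of V_j) for j = i-3,…,i. Then the successive points p_{i-3}, p_{i-2}, p_{i-1}, p_i are pairwise such that p_i ≠ p_{i-1} and p_{i-2} ≠ p_{i-3}, and det(V_i, V_{i-3}) = ((p_i − p_{i-3})·(p_{i-1} − p_{i-2})) / ((p_i − p_{i-1})·(p_{i-2} − p_{i-3})). (In frieze terms: the entry e_{i-1,i} = det(V_i, V_{i-3})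 of the second row of the associated frieze equals the cross ratio [p_{i-3}, p_{i-2}, p_{i-1}, p_i].) -/
/-! With `y j = (V j).2`, the determinant condition says that consecutive points are at
distance `p j - p (j-1) = 1 / (y j * y (j-1))`, while in general
`p i - p (i-3) = det (V i, V (i-3)) / (y i * y (i-3))`. In the cross ratio all the
factors `y j` cancel, leaving `det (V i, V (i-3))`. -/

theorem div_sub_div_eq_inv_of_det_eq_one {K : Type*} [Field K] {U W : K × K}
    (hU : U.2 ≠ 0) (hW : W.2 ≠ 0) (hdet : U.1 * W.2 - U.2 * W.1 = 1) :
    U.1 / U.2 - W.1 / W.2 = (U.2 * W.2)⁻¹ := by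
  rw [div_sub_div _ _ hU hW, hdet, one_div]

/-- **The second row of the frieze associated to a lifted polygon gives cross ratios.**
Let `V : ℤ → ℝ²` satisfy `det (V (j+1), V j) = 1` for all `j`.  Fix `i` and assume
the second coordinates of `V (i-3), …, V i` are nonzero; set `p j = (V j).1 / (V j).2`.
Then `p i ≠ p (i-1)`, `p (i-2) ≠ p (i-3)`, and
`det (V i, V (i-3)) = ((p i - p (i-3)) * (p (i-1) - p (i-2))) /
  ((p i - p (i-1)) * (p (i-2) - p (i-3)))`,
i.e. the frieze entry `e (i-1) i` equals the cross ratio `[p (i-3), p (i-2), p (i-1), p i]`. -/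
theorem frieze_second_row_eq_cross_ratio (V : ℤ → ℝ × ℝ)
    (hdet : ∀ j : ℤ, (V (j + 1)).1 * (V j).2 - (V (j + 1)).2 * (V j).1 = 1)
    (i : ℤ)
    (h0 : (V (i - 3)).2 ≠ 0) (h1 : (V (i - 2)).2 ≠ 0)
    (h2 : (V (i - 1)).2 ≠ 0) (h3 : (V i).2 ≠ 0)
    (p : ℤ → ℝ) (hp : ∀ j : ℤ, p j = (V j).1 / (V j).2) :
    p i ≠ p (i - 1) ∧ p (i - 2) ≠ p (i - 3) ∧
    (V i).1 * (V (i - 3)).2 - (V i).2 * (V (i - 3)).1 =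
      ((p i - p (i - 3)) * (p (i - 1) - p (i - 2))) /
        ((p i - p (i - 1)) * (p (i - 2) - p (i - 3))) := by
  have consecutive : ∀ j k : ℤ, k + 1 = j → (V j).2 ≠ 0 → (V k).2 ≠ 0 →
      p j - p k = ((V j).2 * (V k).2)⁻¹ := by
    rintro _ k rfl hj hk
    rw [hp, hp]
    exact div_sub_div_eq_inv_of_det_eq_one hj hk (hdet k)
  have d₃ := consecutive i (i - 1) (by ring) h3 h2
  have d₂ := consecutive (i - 1) (i - 2) (by ring) h2 h1
  have d₁ := consecutive (i - 2) (i - 3) (by ring) h1 h0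
  have ne₃ : p i - p (i - 1) ≠ 0 := by rw [d₃]; positivity
  have ne₁ : p (i - 2) - p (i - 3) ≠ 0 := by rw [d₁]; positivity
  have outer : p i - p (i - 3) =
      ((V i).1 * (V (i - 3)).2 - (V i).2 * (V (i - 3)).1) / ((V i).2 * (V (i - 3)).2) := by
    rw [hp, hp, div_sub_div _ _ h3 h0]
  refine ⟨sub_ne_zero.mp ne₃, sub_ne_zero.mp ne₁, ?_⟩
  rw [eq_div_iff (mul_ne_zero ne₃ ne₁), outer, d₁, d₂, d₃]
  field_simp
end

section
/- Let x : ℤ → ℝ be a sequence with x_i ≠ 0 for all i ∈ ℤ, satisfying the pentagon recurrence x_{i-1}·x_{i+1} = 1 + x_i for all i ∈ ℤ. Then x is 5-periodic: x_{i+5} = x_i for all i ∈ ℤ. -/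
section Pentagon

variable {R : Type*} [CommRing R] {x : ℤ → R}

theorem pentagon_mul_add_two (hrec : ∀ i : ℤ, x (i - 1) * x (i + 1) = 1 + x i) (i : ℤ) :
    x i * x (i + 2) = 1 + x (i + 1) := by
  simpa only [add_sub_cancel_right, add_assoc, Int.reduceAdd] using hrec (i + 1)

/-- `x (i+3) * (x (i+2) * x (i+5)) = x (i+2) * (1 + x (i+4)) = x (i+1) * x (i+3) + x (i+3)`. -/
theorem pentagon_mul_add_five [IsDomain R] (hrec : ∀ i : ℤ, x (i - 1) * x (i + 1) = 1 + x i)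
    {i : ℤ} (h3 : x (i + 3) ≠ 0) : x (i + 2) * x (i + 5) = 1 + x (i + 1) := by
  have e1 := pentagon_mul_add_two hrec (i + 1)
  have e2 := pentagon_mul_add_two hrec (i + 2)
  have e3 := pentagon_mul_add_two hrec (i + 3)
  simp only [add_assoc, Int.reduceAdd] at e1 e2 e3
  exact mul_left_cancel₀ h3 (by linear_combination x (i + 2) * e3 + e2 - e1)

end Pentagon

/-- **Periodicity of the pentagon recurrence.**
Every bi-infinite sequence of nonzero real numbers satisfying the pentagon recurrence
`x (i-1) * x (i+1) = 1 + x i` is `5`-periodic. -/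
theorem pentagon_recurrence_five_periodic (x : ℤ → ℝ)
    (hne : ∀ i : ℤ, x i ≠ 0)
    (hrec : ∀ i : ℤ, x (i - 1) * x (i + 1) = 1 + x i) :
    ∀ i : ℤ, x (i + 5) = x i := by
  intro i
  have h0 : x i * x (i + 2) = 1 + x (i + 1) := pentagon_mul_add_two hrec i
  have h5 : x (i + 2) * x (i + 5) = 1 + x (i + 1) := pentagon_mul_add_five hrec (hne (i + 3))
  exact mul_left_cancel₀ (hne (i + 2)) (by rw [h5, ← h0, mul_comm])
end

section
/- Let n ≥ 2 be an integer and let V : ℤ → ℝ² be a sequence with V_{i+n} = −V_i for all i and det(V_{i+1}, V_i) = 1 for all i, where det(U,W) := U₁W₂ − U₂W₁. For any t ∈ ℤ, define the symmetric n×n real matrix M by M_{r,s} := det(V_{t+max(r,s)}, V_{t+min(r,s)}) for 0 ≤ r,s ≤ n-1 (so M_{r,r} = 0 and M_{r,r+1} = 1). Then det(M) = −(−2)^{n-2}. In particular the determinant does not depend on the choice of t (the choice of fundamental domain). -/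
/-!
Write `W i = V (t + i)`. Consecutive unimodularity gives `W (k + 2) + W k = c • W (k + 1)` with
`c = det (W (k + 2), W k)`, so row `k + 2` minus `c` times row `k + 1` plus row `k` of `M` vanishes,
except in column `k + 1`: there the entries `det (W (k + 2), W (k + 1))` and `det (W (k + 1), W k)`
sit on opposite sides of the diagonal and add up to `2` instead of cancelling.
Antiperiodicity gives `det (W (n - 1), W 0) = 1`, so after also clearing the last entry of row `1`
with row `0`, the last column is the first unit vector. Expanding along it leaves an upper
triangular matrix with diagonal `1, 2, …, 2`, whence `det M = (-1) ^ (n - 1) * 2 ^ (n - 2)`.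
-/

open Matrix

theorem Matrix.det_eq_of_sub_mem_span_Iio {R ι : Type*} [CommRing R] [Fintype ι] [LinearOrder ι]
    [LocallyFiniteOrderBot ι] {A B : Matrix ι ι R}
    (h : ∀ i, A i - B i ∈ Submodule.span R (B '' Set.Iio i)) : A.det = B.det := by
  have h' (i : ι) : ∃ c : ι → R, ∑ j ∈ Finset.Iio i, c j • B j = A i - B i :=
    (Submodule.mem_span_image_finset_iff_exists_fun' R).1 (by simpa using h i)
  choose c hc using h'
  let L : Matrix ι ι R := of fun i j ↦ if j < i then c i j else 0
  refine det_eq_of_eq_det_one_mul (1 + L) ?_ ?_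
  · rw [det_of_isLowerTriangular _ fun i j hij ↦ ?_]
    · simp [L]
    · simp [L, (show i < j from hij).ne, (show i < j from hij).not_gt]
  · ext i k
    rw [add_mul, Matrix.one_mul, add_apply, mul_apply, ← sub_eq_iff_eq_add', ← Pi.sub_apply,
      ← hc i]
    simp [L, ← Finset.sum_filter, Finset.filter_gt_eq_Iio]

namespace Frieze

variable {R : Type*} [CommRing R]

def cross (u v : R × R) : R := u.1 * v.2 - u.2 * v.1

@[simp] lemma cross_self (u : R × R) : cross u u = 0 := by
  simp [cross, mul_comm]

lemma cross_add_left (u v w : R × R) : cross (u + v) w = cross u w + cross v w := by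
  simp only [cross, Prod.fst_add, Prod.snd_add]; ring

lemma cross_add_right (u v w : R × R) : cross u (v + w) = cross u v + cross u w := by
  simp only [cross, Prod.fst_add, Prod.snd_add]; ring

lemma cross_smul_left (c : R) (u v : R × R) : cross (c • u) v = c * cross u v := by
  simp only [cross, Prod.smul_fst, Prod.smul_snd, smul_eq_mul]; ring

lemma cross_smul_right (c : R) (u v : R × R) : cross u (c • v) = c * cross u v := by
  simp only [cross, Prod.smul_fst, Prod.smul_snd, smul_eq_mul]; ring

lemma add_eq_cross_smul_of_cross_eq_one {u v w : R × R} (hwv : cross w v = 1)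
    (hvu : cross v u = 1) : w + u = cross w u • v := by
  unfold cross at *
  ext <;> simp only [Prod.fst_add, Prod.snd_add, Prod.smul_fst, Prod.smul_snd, smul_eq_mul]
  · linear_combination (-u.1) * hwv - w.1 * hvu
  · linear_combination (-u.2) * hwv - w.2 * hvu

def friezeEntry (W : ℕ → R × R) (r s : ℕ) : R := cross (W (max r s)) (W (min r s))

def friezeMatrix (W : ℕ → R × R) (n : ℕ) : Matrix (Fin n) (Fin n) R :=
  of fun r s ↦ friezeEntry W r s

/-- The rows of `friezeMatrix W (m + 2)` after `R₁ ↦ R₁ - cross (W (m + 1)) (W 1) • R₀`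
and `R_{k+2} ↦ R_{k+2} - cross (W (k + 2)) (W k) • R_{k+1} + R_k`. -/
def friezeReducedEntry (W : ℕ → R × R) (m : ℕ) : ℕ → ℕ → R
  | 0, s => friezeEntry W 0 s
  | 1, s => friezeEntry W 1 s - cross (W (m + 1)) (W 1) * friezeEntry W 0 s
  | k + 2, s => if s = k + 1 then 2 else 0

def friezeReduced (W : ℕ → R × R) (m : ℕ) : Matrix (Fin (m + 2)) (Fin (m + 2)) R :=
  of fun k s ↦ friezeReducedEntry W m k s

variable {W : ℕ → R × R}

lemma friezeEntry_add_two_add (hW : ∀ i, cross (W (i + 1)) (W i) = 1) (a s : ℕ) :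
    friezeEntry W (a + 2) s + friezeEntry W a s =
      cross (W (a + 2)) (W a) * friezeEntry W (a + 1) s + if s = a + 1 then 2 else 0 := by
  have hrec : W (a + 2) + W a = cross (W (a + 2)) (W a) • W (a + 1) :=
    add_eq_cross_smul_of_cross_eq_one (hW (a + 1)) (hW a)
  rcases lt_trichotomy s (a + 1) with hs | rfl | hs
  · simp only [friezeEntry, max_eq_left, min_eq_right, hs.le, Nat.lt_succ_iff.1 hs,
      (show s ≤ a + 2 by omega)]
    rw [← cross_add_left, hrec, cross_smul_left, if_neg hs.ne, add_zero]
  · simp [friezeEntry, hW, one_add_one_eq_two]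
  · simp only [friezeEntry, max_eq_right, min_eq_left, hs.le, (show a ≤ s by omega),
      (show a + 2 ≤ s by omega)]
    rw [← cross_add_right, hrec, cross_smul_right, if_neg hs.ne', add_zero]

theorem det_friezeReduced (hW : ∀ i, cross (W (i + 1)) (W i) = 1)
    {m : ℕ} (hclose : cross (W (m + 1)) (W 0) = 1) :
    (friezeReduced W m).det = (-1) ^ (m + 1) * 2 ^ m := by
  set A := friezeReduced W m
  have hlast (k : Fin (m + 2)) : A k (Fin.last _) = if k = 0 then 1 else 0 := by
    rcases k with ⟨_ | _ | k, hk⟩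
    · simp [A, friezeReduced, friezeReducedEntry, friezeEntry, hclose]
    · simp [A, friezeReduced, friezeReducedEntry, friezeEntry, hclose]
    · simp [A, friezeReduced, friezeReducedEntry, Fin.ext_iff]
      omega
  have hminor : (A.submatrix Fin.succ Fin.castSucc).IsUpperTriangular := by
    intro i j (hij : (j : ℕ) < i)
    rcases i with ⟨_ | i, hi⟩
    · simp at hij
    · simp [A, friezeReduced, friezeReducedEntry] at hij ⊢
      omega
  have hdiag (i : Fin (m + 1)) : A i.succ i.castSucc = if i = 0 then 1 else 2 := by
    rcases i with ⟨_ | i, hi⟩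
    · simp [A, friezeReduced, friezeReducedEntry, friezeEntry, hW 0]
    · simp [A, friezeReduced, friezeReducedEntry, Fin.ext_iff]
  rw [det_succ_column A (Fin.last _), Fintype.sum_eq_single 0 fun i hi ↦ by simp [hlast, hi]]
  simp [det_of_isUpperTriangular hminor, hlast, hdiag, Fin.prod_univ_succ, Fin.succ_ne_zero]

theorem det_friezeReduced_eq_det_friezeMatrix (hW : ∀ i, cross (W (i + 1)) (W i) = 1) (m : ℕ) :
    (friezeReduced W m).det = (friezeMatrix W (m + 2)).det := by
  set B := friezeMatrix W (m + 2)
  have hB (j k : Fin (m + 2)) (hjk : (j : ℕ) < k) : B j ∈ Submodule.span R (B '' Set.Iio k) :=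
    Submodule.subset_span (Set.mem_image_of_mem B hjk)
  refine det_eq_of_sub_mem_span_Iio fun k ↦ ?_
  rcases k with ⟨_ | _ | a, hk⟩
  · convert Submodule.zero_mem _
    ext s
    simp [B, friezeMatrix, friezeReduced, friezeReducedEntry]
  · convert Submodule.smul_mem _ (-cross (W (m + 1)) (W 1)) (hB 0 ⟨_, hk⟩ Nat.zero_lt_one)
    ext s
    simp [B, friezeMatrix, friezeReduced, friezeReducedEntry]
  · convert Submodule.add_mem _ (Submodule.smul_mem _ (-cross (W (a + 2)) (W a))
      (hB ⟨a + 1, by omega⟩ ⟨_, hk⟩ (by simp))) (hB ⟨a, by omega⟩ ⟨_, hk⟩ (by simp))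
    ext s
    simp [B, friezeMatrix, friezeReduced, friezeReducedEntry]
    linear_combination (friezeEntry_add_two_add hW a s).symm

theorem det_friezeMatrix (hW : ∀ i, cross (W (i + 1)) (W i) = 1) {m : ℕ}
    (hclose : cross (W (m + 1)) (W 0) = 1) : (friezeMatrix W (m + 2)).det = -(-2) ^ m := by
  rw [← det_friezeReduced_eq_det_friezeMatrix hW, det_friezeReduced hW hclose, neg_pow (2 : R),
    pow_succ]
  ring

end Frieze

open Frieze

/-- **Determinant of the symmetrized frieze matrix (Broline–Crowe–Isaacs).**
Let `n ≥ 2` and let `V : ℤ → ℝ²` satisfy `V (i+n) = -V i` and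
`det (V (i+1), V i) = 1` for all `i`.  For any `t : ℤ`, the symmetric `n × n`
matrix `M` with `M r s = det (V (t + max r s), V (t + min r s))` has determinant
`-(-2)^(n-2)`; in particular the determinant does not depend on `t`. -/
theorem frieze_symmetric_matrix_det (n : ℕ) (hn : 2 ≤ n) (V : ℤ → ℝ × ℝ)
    (hanti : ∀ i : ℤ, V (i + (n : ℤ)) = -V i)
    (hdet : ∀ i : ℤ, (V (i + 1)).1 * (V i).2 - (V (i + 1)).2 * (V i).1 = 1)
    (t : ℤ) :
    Matrix.det (Matrix.of fun r s : Fin n =>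
      (V (t + (max (r : ℕ) (s : ℕ) : ℕ))).1 * (V (t + (min (r : ℕ) (s : ℕ) : ℕ))).2 -
      (V (t + (max (r : ℕ) (s : ℕ) : ℕ))).2 * (V (t + (min (r : ℕ) (s : ℕ) : ℕ))).1) =
    -(-2 : ℝ) ^ (n - 2) := by
  obtain ⟨m, rfl⟩ := Nat.exists_eq_add_of_le' hn
  have hW (i : ℕ) : cross (V (t + ↑(i + 1))) (V (t + ↑i)) = 1 := by
    simpa [cross, ← add_assoc] using hdet (t + i)
  have hclose : cross (V (t + ↑(m + 1))) (V (t + ↑(0 : ℕ))) = 1 := by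
    have h := hdet (t + ↑(m + 1))
    rw [show t + ↑(m + 1) + 1 = t + ↑(m + 2) by push_cast; ring, hanti] at h
    simp only [cross, CharP.cast_eq_zero, add_zero, Prod.fst_neg, Prod.snd_neg] at h ⊢
    linear_combination h
  rw [Nat.add_sub_cancel]
  exact det_friezeMatrix (W := fun i ↦ V (t + i)) hW hclose
end

section
/- Let k ≥ 1 and w ≥ 0 be integers, F a field, and let f be a tame SL_{k+1}-frieze of width w over F. Set n := k + w + 2. Then f(i+n, j) = (−1)^k · f(i,j) and f(i, j+n) = (−1)^k · f(i,j) for all i,j ∈ ℤ; in particular f(i+n, j+n) = f(i,j) for all i,j ∈ ℤ. -/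
/-- The adjacent minor of order `r` of `f : ℤ → ℤ → F` based at `(i, j)`:
the determinant of the `r × r` matrix `(f (i+s) (j+t))_{0 ≤ s,t ≤ r-1}`. -/
noncomputable def adjMinor {F : Type*} [Field F] (f : ℤ → ℤ → F) (r : ℕ) (i j : ℤ) : F :=
  Matrix.det (Matrix.of fun s t : Fin r => f (i + (s : ℕ)) (j + (t : ℕ)))

/-!
In a tame `SL_{k+1}`-tiling any `k + 1` consecutive rows are linearly independent (their adjacent
minors are `1`) while any `k + 2` consecutive rows are dependent, so every row lies in the span of
rows `i + 1, …, i + k + 1`, whatever `i` is. Restricted to the columns `i + w + 1, …, i + w + k + 1`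
these rows form a basis, and the frieze conditions make the restrictions of rows `i` and
`i + n` multiples of the last unit vector, with ratio `f (i, i + w + k + 1)`; a triangular minor
shows that this entry is `(-1)^k`. Hence row `i + n` is `(-1)^k` times row `i`. Columns follow by
reflecting the frieze, which swaps its two boundary diagonals.
-/

open Matrix Submodule Set

theorem eq_of_mem_span_of_linearIndependent_comp {R M N ι : Type*} [Semiring R]
    [AddCommMonoid M] [AddCommMonoid N] [Module R M] [Module R N] [Fintype ι] {v : ι → M}
    (L : M →ₗ[R] N) (hv : LinearIndependent R (L ∘ v)) {x y : M} (hx : x ∈ span R (range v))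
    (hy : y ∈ span R (range v)) (h : L x = L y) : x = y := by
  obtain ⟨c, rfl⟩ := (mem_span_range_iff_exists_fun R).1 hx
  obtain ⟨d, rfl⟩ := (mem_span_range_iff_exists_fun R).1 hy
  obtain rfl : c = d := hv.fintypeLinearCombination_injective <| by
    simpa [Fintype.linearCombination_apply] using h
  rfl

theorem Matrix.det_eq_neg_one_pow_mul_apply_zero_last {R : Type*} [CommRing R] {n : ℕ}
    (A : Matrix (Fin (n + 1)) (Fin (n + 1)) R) (h₀ : ∀ j, j ≠ Fin.last n → A 0 j = 0)
    (hlt : ∀ p q : Fin n, p < q → A p.succ q.castSucc = 0)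
    (hdiag : ∀ p : Fin n, A p.succ p.castSucc = 1) :
    A.det = (-1) ^ n * A 0 (Fin.last n) := by
  rw [det_succ_row_zero, Finset.sum_eq_single (Fin.last n) (fun j _ hj => by simp [h₀ j hj])
    (by simp), Fin.succAbove_last, Fin.val_last,
    det_of_isLowerTriangular (A.submatrix _ _) fun p q hpq => hlt p q hpq]
  simp [hdiag]

section Window

variable {R : Type*} [Semiring R]

def window (m : ℕ) (j : ℤ) : (ℤ → R) →ₗ[R] (Fin m → R) :=
  LinearMap.funLeft R R fun t => j + (t : ℕ)

@[simp]
theorem window_apply (m : ℕ) (j : ℤ) (u : ℤ → R) (t : Fin m) : window m j u t = u (j + (t : ℕ)) :=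
  rfl

/-- Consecutive windows overlap in `r + 1` places, which pins down the coefficients of `u`. -/
theorem mem_span_range_of_forall_window_mem_span {r : ℕ} {v : Fin (r + 1) → ℤ → R} {u : ℤ → R}
    (hv : ∀ j, LinearIndependent R (window (r + 1) j ∘ v))
    (hu : ∀ j, window (r + 2) j u ∈ span R (range (window (r + 2) j ∘ v))) :
    u ∈ span R (range v) := by
  choose c hc using fun j => (mem_span_range_iff_exists_fun R).1 (hu j)
  have hc' (j : ℤ) (t : Fin (r + 2)) : ∑ s, c j s * v s (j + (t : ℕ)) = u (j + (t : ℕ)) := by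
    simpa using congrFun (hc j) t
  have hstep (j : ℤ) : c (j + 1) = c j := by
    refine (hv (j + 1)).fintypeLinearCombination_injective (funext fun t => ?_)
    have h₁ := hc' (j + 1) t.castSucc
    have h₂ := hc' j t.succ
    rw [Fin.val_castSucc] at h₁
    rw [Fin.val_succ, Nat.cast_succ, ← add_assoc, add_right_comm] at h₂
    simp only [Fintype.linearCombination_apply, Finset.sum_apply, Pi.smul_apply,
      Function.comp_apply, window_apply, smul_eq_mul]
    rw [h₁, h₂]
  have hconst (j : ℤ) : c j = c 0 := by
    induction j using Int.induction_on with
    | zero => rfl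
    | succ n ih => rw [hstep, ih]
    | pred n ih => rw [← ih, ← hstep, sub_add_cancel]
  refine (mem_span_range_iff_exists_fun R).2 ⟨c 0, funext fun j => ?_⟩
  simpa [hconst j] using hc' j 0

end Window

section Tiling

variable {F : Type*} [Field F]

theorem linearIndependent_window_comp_iff_adjMinor_ne_zero {m : ℕ} (f : ℤ → ℤ → F) (i j : ℤ) :
    LinearIndependent F (window m j ∘ fun s : Fin m => f (i + (s : ℕ))) ↔
      adjMinor f m i j ≠ 0 := by
  rw [adjMinor, ← isUnit_iff_ne_zero, ← isUnit_iff_isUnit_det,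
    ← linearIndependent_rows_iff_isUnit]
  rfl

structure IsTameSLTiling (k : ℕ) (f : ℤ → ℤ → F) : Prop where
  adjMinor_eq_one : ∀ i j, adjMinor f (k + 1) i j = 1
  adjMinor_eq_zero : ∀ i j, adjMinor f (k + 2) i j = 0

def rowSpan (k : ℕ) (f : ℤ → ℤ → F) (i : ℤ) : Submodule F (ℤ → F) :=
  span F (range fun s : Fin (k + 1) => f (i + (s : ℕ)))

namespace IsTameSLTiling

variable {k : ℕ} {f : ℤ → ℤ → F} (hf : IsTameSLTiling k f)
include hf

theorem linearIndependent_window (i j : ℤ) :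
    LinearIndependent F (window (k + 1) j ∘ fun s : Fin (k + 1) => f (i + (s : ℕ))) :=
  (linearIndependent_window_comp_iff_adjMinor_ne_zero f i j).2 <| by
    simp [hf.adjMinor_eq_one]

theorem not_linearIndependent_window (i j : ℤ) :
    ¬LinearIndependent F (window (k + 2) j ∘ fun s : Fin (k + 2) => f (i + (s : ℕ))) := by
  simp [linearIndependent_window_comp_iff_adjMinor_ne_zero, hf.adjMinor_eq_zero]

theorem window_apply_add_mem_span (i j : ℤ) :
    window (k + 2) j (f (i + (k + 1))) ∈
      span F (range (window (k + 2) j ∘ fun s : Fin (k + 1) => f (i + (s : ℕ)))) := by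
  have hinit : Fin.init (window (k + 2) j ∘ fun s : Fin (k + 2) => f (i + (s : ℕ))) =
      window (k + 2) j ∘ fun s : Fin (k + 1) => f (i + (s : ℕ)) := by
    ext s t
    simp [Fin.init]
  have h := hf.not_linearIndependent_window i j
  rw [linearIndependent_finSucc', hinit, not_and, not_not] at h
  convert h (.of_comp (LinearMap.funLeft F F Fin.castSucc) (hf.linearIndependent_window i j))
  simp

theorem window_apply_mem_span_add_one (i j : ℤ) :
    window (k + 2) j (f i) ∈
      span F (range (window (k + 2) j ∘ fun s : Fin (k + 1) => f (i + 1 + (s : ℕ)))) := by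
  have htail : Fin.tail (window (k + 2) j ∘ fun s : Fin (k + 2) => f (i + (s : ℕ))) =
      window (k + 2) j ∘ fun s : Fin (k + 1) => f (i + 1 + (s : ℕ)) := by
    ext s t
    simp [Fin.tail, add_assoc, add_comm (1 : ℤ)]
  have h := hf.not_linearIndependent_window i j
  rw [linearIndependent_finSucc, htail, not_and, not_not] at h
  convert h (.of_comp (LinearMap.funLeft F F Fin.castSucc) (hf.linearIndependent_window (i + 1) j))
  simp

theorem apply_add_mem_rowSpan (i : ℤ) : f (i + (k + 1)) ∈ rowSpan k f i :=
  mem_span_range_of_forall_window_mem_span (hf.linearIndependent_window i)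
    (hf.window_apply_add_mem_span i)

theorem apply_mem_rowSpan_add_one (i : ℤ) : f i ∈ rowSpan k f (i + 1) :=
  mem_span_range_of_forall_window_mem_span (hf.linearIndependent_window (i + 1))
    (hf.window_apply_mem_span_add_one i)

theorem rowSpan_add_one (i : ℤ) : rowSpan k f (i + 1) = rowSpan k f i := by
  apply le_antisymm <;> refine span_le.2 (range_subset_iff.2 fun s => ?_)
  · refine Fin.lastCases ?_ (fun s => ?_) s
    · simpa [add_assoc, add_comm (1 : ℤ)] using hf.apply_add_mem_rowSpan i
    · exact subset_span ⟨s.succ, by simp [add_assoc, add_comm (1 : ℤ)]⟩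
  · refine Fin.cases ?_ (fun s => ?_) s
    · simpa using hf.apply_mem_rowSpan_add_one i
    · exact subset_span ⟨s.castSucc, by simp [add_assoc, add_comm (1 : ℤ)]⟩

theorem rowSpan_eq (i i' : ℤ) : rowSpan k f i = rowSpan k f i' := by
  suffices ∀ i, rowSpan k f i = rowSpan k f 0 by rw [this i, this i']
  intro i
  induction i using Int.induction_on with
  | zero => rfl
  | succ n ih => rw [hf.rowSpan_add_one, ih]
  | pred n ih => rw [← ih, ← hf.rowSpan_add_one, sub_add_cancel]

theorem apply_mem_rowSpan (i i' : ℤ) : f i' ∈ rowSpan k f i :=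
  hf.rowSpan_eq i' i ▸ subset_span ⟨0, by simp⟩

end IsTameSLTiling

end Tiling

section Frieze

variable {F : Type*} [Field F]

structure IsTameSLFrieze (k w : ℕ) (f : ℤ → ℤ → F) : Prop extends IsTameSLTiling k f where
  apply_sub_one : ∀ i, f i (i - 1) = 1
  apply_add_width : ∀ i, f i (i + w) = 1
  apply_sub_one_sub : ∀ i, ∀ l : ℕ, 1 ≤ l → l ≤ k → f i (i - 1 - l) = 0
  apply_add_width_add : ∀ i, ∀ l : ℕ, 1 ≤ l → l ≤ k → f i (i + w + l) = 0

theorem adjMinor_transpose (f : ℤ → ℤ → F) (r : ℕ) (c i j : ℤ) :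
    adjMinor (fun a b => f b (a + c)) r i j = adjMinor f r j (i + c) := by
  rw [adjMinor, adjMinor, ← det_transpose]
  congr 1
  ext s t
  simp [add_right_comm]

namespace IsTameSLFrieze

variable {k w : ℕ} {f : ℤ → ℤ → F} (hf : IsTameSLFrieze k w f)
include hf

theorem apply_eq_zero_of_le_of_lt {i j : ℤ} (h₁ : i - 1 - k ≤ j) (h₂ : j < i - 1) : f i j = 0 := by
  obtain ⟨l, rfl⟩ : ∃ l : ℕ, j = i - 1 - l := ⟨(i - 1 - j).toNat, by omega⟩
  exact hf.apply_sub_one_sub i l (by omega) (by omega)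

theorem apply_eq_zero_of_lt_of_le {i j : ℤ} (h₁ : i + w < j) (h₂ : j ≤ i + w + k) : f i j = 0 := by
  obtain ⟨l, rfl⟩ : ∃ l : ℕ, j = i + w + l := ⟨(j - i - w).toNat, by omega⟩
  exact hf.apply_add_width_add i l (by omega) (by omega)

theorem apply_add_width_add_one_add (i : ℤ) : f i (i + w + 1 + k) = (-1) ^ k := by
  have hdet := hf.adjMinor_eq_one i (i + w + 1)
  rw [adjMinor, det_eq_neg_one_pow_mul_apply_zero_last] at hdet
  · simp only [of_apply, Fin.val_zero, Fin.val_last, Nat.cast_zero, add_zero] at hdet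
    calc f i (i + w + 1 + k) = (-1) ^ k * ((-1) ^ k * f i (i + w + 1 + k)) := by
          rw [← mul_assoc, ← mul_pow]; simp
      _ = (-1) ^ k := by rw [hdet, mul_one]
  · intro j hj
    have := Fin.val_lt_last hj
    exact hf.apply_eq_zero_of_lt_of_le (by simp; omega) (by simp; omega)
  · intro p q hpq
    have : (p : ℕ) < q := hpq
    exact hf.apply_eq_zero_of_lt_of_le (by simp; omega) (by simp; omega)
  · intro p
    simp only [of_apply, Fin.val_succ, Fin.val_castSucc, Nat.cast_add, Nat.cast_one]
    convert hf.apply_add_width (i + (p + 1)) using 2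
    ring

theorem apply_add_period (i j : ℤ) : f (i + ((k : ℤ) + w + 2)) j = (-1) ^ k * f i j := by
  set x := f i (i + w + 1 + k) with hx
  have hwindow : window (k + 1) (i + w + 1) (f i) =
      window (k + 1) (i + w + 1) (x • f (i + ((k : ℤ) + w + 2))) := by
    ext t
    simp only [window_apply, Pi.smul_apply, smul_eq_mul]
    rcases Fin.eq_castSucc_or_eq_last t with ⟨t, rfl⟩ | rfl
    · have := t.isLt
      rw [hf.apply_eq_zero_of_lt_of_le (by simp; omega) (by simp; omega),
        hf.apply_eq_zero_of_le_of_lt (by simp; omega) (by simp; omega), mul_zero]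
    · rw [Fin.val_last, ← hx, show i + w + 1 + (k : ℤ) = i + ((k : ℤ) + w + 2) - 1 by ring,
        hf.apply_sub_one, mul_one]
  have hrow : f i = x • f (i + ((k : ℤ) + w + 2)) :=
    eq_of_mem_span_of_linearIndependent_comp _ (hf.linearIndependent_window (i + 1) (i + w + 1))
      (hf.apply_mem_rowSpan _ _) (smul_mem _ _ (hf.apply_mem_rowSpan _ _)) hwindow
  rw [congrFun hrow j, Pi.smul_apply, smul_eq_mul, hx, hf.apply_add_width_add_one_add,
    ← mul_assoc, ← mul_pow]
  simp

theorem transpose : IsTameSLFrieze k w fun a b => f b (a + (w - 1)) where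
  adjMinor_eq_one i j := by rw [adjMinor_transpose]; exact hf.adjMinor_eq_one _ _
  adjMinor_eq_zero i j := by rw [adjMinor_transpose]; exact hf.adjMinor_eq_zero _ _
  apply_sub_one i := by convert hf.apply_add_width (i - 1) using 2; ring
  apply_add_width i := by convert hf.apply_sub_one (i + w) using 2; ring
  apply_sub_one_sub i l h₁ h₂ := by
    convert hf.apply_add_width_add (i - 1 - l) l h₁ h₂ using 2; ring
  apply_add_width_add i l h₁ h₂ := by
    convert hf.apply_sub_one_sub (i + w + l) l h₁ h₂ using 2; ring

theorem apply_add_period_right (i j : ℤ) : f i (j + ((k : ℤ) + w + 2)) = (-1) ^ k * f i j := by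
  have h := hf.transpose.apply_add_period (j - (w - 1)) i
  rwa [sub_add_cancel, show j - (w - 1) + ((k : ℤ) + w + 2) + (w - 1) = j + ((k : ℤ) + w + 2) by
    ring] at h

end IsTameSLFrieze

end Frieze

theorem slk_frieze_periodicity_general {F : Type*} [Field F] (k w : ℕ)
    (f : ℤ → ℤ → F)
    (hSL : ∀ i j : ℤ, adjMinor f (k + 1) i j = 1)
    (htame : ∀ i j : ℤ, adjMinor f (k + 2) i j = 0)
    (hb1 : ∀ i : ℤ, f i (i - 1) = 1)
    (hb2 : ∀ i : ℤ, f i (i + (w : ℤ)) = 1)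
    (hb3 : ∀ i : ℤ, ∀ l : ℕ, 1 ≤ l → l ≤ k →
      f i (i - 1 - (l : ℤ)) = 0 ∧ f i (i + (w : ℤ) + (l : ℤ)) = 0) :
    ∀ i j : ℤ,
      f (i + ((k : ℤ) + (w : ℤ) + 2)) j = (-1) ^ k * f i j ∧
      f i (j + ((k : ℤ) + (w : ℤ) + 2)) = (-1) ^ k * f i j ∧
      f (i + ((k : ℤ) + (w : ℤ) + 2)) (j + ((k : ℤ) + (w : ℤ) + 2)) = f i j := by
  have hf : IsTameSLFrieze k w f :=
    { adjMinor_eq_one := hSL, adjMinor_eq_zero := htame, apply_sub_one := hb1,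
      apply_add_width := hb2, apply_sub_one_sub := fun i l h₁ h₂ => (hb3 i l h₁ h₂).1,
      apply_add_width_add := fun i l h₁ h₂ => (hb3 i l h₁ h₂).2 }
  intro i j
  refine ⟨hf.apply_add_period i j, hf.apply_add_period_right i j, ?_⟩
  rw [hf.apply_add_period, hf.apply_add_period_right, ← mul_assoc, ← mul_pow]
  simp

/-- **Periodicity of tame `SL_{k+1}`-friezes.**
Every tame `SL_{k+1}`-frieze of width `w` over a field `F` satisfies, with
`n = k + w + 2`, the antiperiodicity relations
`f (i+n) j = (-1)^k * f i j` and `f i (j+n) = (-1)^k * f i j`,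
hence `f (i+n) (j+n) = f i j`, for all `i j : ℤ`. -/
theorem slk_frieze_periodicity {F : Type*} [Field F] (k w : ℕ) (hk : 1 ≤ k)
    (f : ℤ → ℤ → F)
    (hSL : ∀ i j : ℤ, adjMinor f (k + 1) i j = 1)
    (htame : ∀ i j : ℤ, adjMinor f (k + 2) i j = 0)
    (hb1 : ∀ i : ℤ, f i (i - 1) = 1)
    (hb2 : ∀ i : ℤ, f i (i + (w : ℤ)) = 1)
    (hb3 : ∀ i : ℤ, ∀ l : ℕ, 1 ≤ l → l ≤ k →
      f i (i - 1 - (l : ℤ)) = 0 ∧ f i (i + (w : ℤ) + (l : ℤ)) = 0) :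
    ∀ i j : ℤ,
      f (i + ((k : ℤ) + (w : ℤ) + 2)) j = (-1) ^ k * f i j ∧
      f i (j + ((k : ℤ) + (w : ℤ) + 2)) = (-1) ^ k * f i j ∧
      f (i + ((k : ℤ) + (w : ℤ) + 2)) (j + ((k : ℤ) + (w : ℤ) + 2)) = f i j :=
  slk_frieze_periodicity_general k w f hSL htame hb1 hb2 hb3
end

section
/- Let k ≥ 1 be an integer, F a field, and f : ℤ × ℤ → F a function such that every adjacent minor of order k+1 of f equals 1 and every adjacent minor of order k of f is nonzero. Then every adjacent minor of order k+2 of f equals 0; that is, f is a tame SL_{k+1}-tiling. -/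
theorem Function.Injective.sumElim_bijective {α β γ : Type*} [Fintype α] [Fintype β]
    [Fintype γ] {g : α → γ} {r : β → γ} (hg : g.Injective) (hr : r.Injective)
    (hgr : ∀ a b, g a ≠ r b) (hcard : Fintype.card α + Fintype.card β = Fintype.card γ) :
    (Sum.elim g r).Bijective :=
  (Fintype.bijective_iff_injective_and_card _).mpr ⟨hg.sumElim hr hgr, by simp [hcard]⟩

namespace Matrix

variable {ι κ m R : Type*} [Fintype κ] [DecidableEq κ] [Fintype m] [DecidableEq m] [CommRing R]

theorem det_submatrix_sumElim_eq_det_mul_det_schur (A : Matrix ι ι R) (e : κ → ι)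
    (hD : IsUnit (A.submatrix e e).det) (r c : m → ι) :
    (A.submatrix (Sum.elim e r) (Sum.elim e c)).det = (A.submatrix e e).det *
      ((A - A.submatrix id e * (A.submatrix e e)⁻¹ * A.submatrix e id).submatrix r c).det := by
  have := invertibleOfIsUnitDet _ hD
  have hblocks : A.submatrix (Sum.elim e r) (Sum.elim e c) = fromBlocks (A.submatrix e e)
      (A.submatrix e c) (A.submatrix r e) (A.submatrix r c) := by
    ext (i | i) (j | j) <;> rfl
  rw [hblocks, det_fromBlocks₁₁, invOf_eq_nonsing_inv]
  rfl

theorem det_submatrix_mul_det_submatrix_swap [Fintype ι] [DecidableEq ι] (M N : Matrix ι ι R)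
    (e e' : m ≃ ι) :
    (M.submatrix e e').det * (N.submatrix e' e).det = M.det * N.det := by
  have hM : M.submatrix e e' = (M.submatrix e e).submatrix id (e'.trans e.symm) := by
    ext; simp
  have hN : N.submatrix e' e = (N.submatrix e e).submatrix (e'.trans e.symm) id := by
    ext; simp
  rw [hM, hN, det_permute', det_permute, det_submatrix_equiv_self, det_submatrix_equiv_self,
    mul_mul_mul_comm, ← Int.cast_mul, ← Units.val_mul, Int.units_mul_self, Units.val_one,
    Int.cast_one, one_mul]

theorem det_mul_det_interior_eq_of_isUnit {n : ℕ} (A : Matrix (Fin (n + 2)) (Fin (n + 2)) R)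
    (hC : IsUnit (A.submatrix (Fin.succ ∘ Fin.castSucc) (Fin.succ ∘ Fin.castSucc)).det) :
    A.det * (A.submatrix (Fin.succ ∘ Fin.castSucc) (Fin.succ ∘ Fin.castSucc)).det =
      (A.submatrix Fin.castSucc Fin.castSucc).det * (A.submatrix Fin.succ Fin.succ).det -
        (A.submatrix Fin.castSucc Fin.succ).det * (A.submatrix Fin.succ Fin.castSucc).det := by
  set inner : Fin n → Fin (n + 2) := Fin.succ ∘ Fin.castSucc
  set S := A - A.submatrix id inner * (A.submatrix inner inner)⁻¹ * A.submatrix inner id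
  set δ := (A.submatrix inner inner).det
  have hinner : inner.Injective := (Fin.succ_injective _).comp (Fin.castSucc_injective _)
  let e₀ : Fin n ⊕ Unit ≃ Fin (n + 1) := .ofBijective (Sum.elim Fin.succ fun _ ↦ 0)
    ((Fin.succ_injective _).sumElim_bijective (Function.injective_of_subsingleton _)
      (fun t _ ↦ Fin.succ_ne_zero t) (by simp))
  let eₗ : Fin n ⊕ Unit ≃ Fin (n + 1) :=
    .ofBijective (Sum.elim Fin.castSucc fun _ ↦ Fin.last n)
      ((Fin.castSucc_injective _).sumElim_bijective (Function.injective_of_subsingleton _)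
        (fun t _ ↦ (Fin.castSucc_lt_last t).ne) (by simp))
  let e : Fin n ⊕ Fin 2 ≃ Fin (n + 2) := .ofBijective (Sum.elim inner ![0, Fin.last (n + 1)])
    (hinner.sumElim_bijective (by intro a b; fin_cases a <;> fin_cases b <;> simp [Fin.ext_iff])
      (by intro t a; fin_cases a <;> simp [inner, Fin.ext_iff]; omega) (by simp))
  have h₀ : Fin.castSucc ∘ e₀ = Sum.elim inner fun _ ↦ 0 := by
    funext t; rcases t with t | t <;> rfl
  have hₗ : Fin.succ ∘ eₗ = Sum.elim inner fun _ ↦ Fin.last (n + 1) := by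
    funext t; rcases t with t | t <;> rfl
  have hTL : (A.submatrix Fin.castSucc Fin.castSucc).det = δ * S 0 0 := by
    rw [← det_submatrix_equiv_self e₀, submatrix_submatrix, h₀,
      det_submatrix_sumElim_eq_det_mul_det_schur _ _ hC]
    simp only [det_unique]
    rfl
  have hBR : (A.submatrix Fin.succ Fin.succ).det = δ * S (Fin.last _) (Fin.last _) := by
    rw [← det_submatrix_equiv_self eₗ, submatrix_submatrix, hₗ,
      det_submatrix_sumElim_eq_det_mul_det_schur _ _ hC]
    simp only [det_unique]
    rfl
  have hTRBL : (A.submatrix Fin.castSucc Fin.succ).det * (A.submatrix Fin.succ Fin.castSucc).det =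
      δ * S 0 (Fin.last _) * (δ * S (Fin.last _) 0) := by
    rw [← det_submatrix_mul_det_submatrix_swap _ _ e₀ eₗ, submatrix_submatrix,
      submatrix_submatrix, h₀, hₗ, det_submatrix_sumElim_eq_det_mul_det_schur _ _ hC,
      det_submatrix_sumElim_eq_det_mul_det_schur _ _ hC]
    simp only [det_unique]
    rfl
  have hA : A.det =
      δ * (S 0 0 * S (Fin.last _) (Fin.last _) - S 0 (Fin.last _) * S (Fin.last _) 0) := by
    rw [← det_submatrix_equiv_self e]
    change (A.submatrix (Sum.elim inner ![0, Fin.last (n + 1)])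
      (Sum.elim inner ![0, Fin.last (n + 1)])).det = _
    rw [det_submatrix_sumElim_eq_det_mul_det_schur _ _ hC, det_fin_two]
    rfl
  rw [hTL, hBR, hTRBL, hA]
  ring

end Matrix

theorem adjMinor_eq_det_submatrix {F : Type*} [Field F] (f : ℤ → ℤ → F) {r r' : ℕ}
    {i j i' j' : ℤ} {p q : Fin r → Fin r'} (hp : ∀ s, i + (p s : ℕ) = i' + (s : ℕ))
    (hq : ∀ t, j + (q t : ℕ) = j' + (t : ℕ)) :
    adjMinor f r i' j' =
      ((Matrix.of fun s t : Fin r' => f (i + (s : ℕ)) (j + (t : ℕ))).submatrix p q).det := by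
  unfold adjMinor
  congr 1
  ext s t
  simp [hp, hq]

theorem adjMinor_mul_adjMinor_eq_of_ne_zero {F : Type*} [Field F] (f : ℤ → ℤ → F) (r : ℕ)
    (i j : ℤ) (h : adjMinor f r (i + 1) (j + 1) ≠ 0) :
    adjMinor f (r + 2) i j * adjMinor f r (i + 1) (j + 1) =
      adjMinor f (r + 1) i j * adjMinor f (r + 1) (i + 1) (j + 1) -
        adjMinor f (r + 1) i (j + 1) * adjMinor f (r + 1) (i + 1) j := by
  have hcast {m : ℕ} (s : Fin m) (x : ℤ) : x + (s.castSucc : ℕ) = x + (s : ℕ) := rfl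
  have hsucc {m : ℕ} (s : Fin m) (x : ℤ) : x + (s.succ : ℕ) = x + 1 + (s : ℕ) := by
    push_cast [Fin.val_succ]; ring
  have hinner (s : Fin r) (x : ℤ) :
      x + ((Fin.succ ∘ Fin.castSucc) s : ℕ) = x + 1 + (s : ℕ) :=
    hsucc _ _
  have hminor {m : ℕ} {i' j' : ℤ} {p q : Fin m → Fin (r + 2)}
      (hp : ∀ s, i + (p s : ℕ) = i' + s) (hq : ∀ t, j + (q t : ℕ) = j' + t) :=
    adjMinor_eq_det_submatrix f hp hq
  rw [hminor (hinner · i) (hinner · j)] at h ⊢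
  rw [hminor (hcast · i) (hcast · j), hminor (hsucc · i) (hsucc · j),
    hminor (hcast · i) (hsucc · j), hminor (hsucc · i) (hcast · j)]
  exact Matrix.det_mul_det_interior_eq_of_isUnit _ h.isUnit

theorem slk_tiling_tame_of_nonzero_minors_general {F : Type*} [Field F] (k : ℕ)
    (f : ℤ → ℤ → F)
    (hSL : ∀ i j : ℤ, adjMinor f (k + 1) i j = 1)
    (hnz : ∀ i j : ℤ, adjMinor f k i j ≠ 0) :
    ∀ i j : ℤ, adjMinor f (k + 2) i j = 0 := by
  intro i j
  have h := adjMinor_mul_adjMinor_eq_of_ne_zero f k i j (hnz _ _)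
  rw [hSL, hSL, hSL, hSL, sub_self] at h
  exact (mul_eq_zero.mp h).resolve_right (hnz _ _)

/-- **`SL_{k+1}`-tilings with nonvanishing order-`k` minors are tame.**
If all adjacent minors of order `k+1` of `f` equal `1` and all adjacent minors of
order `k` are nonzero, then all adjacent minors of order `k+2` vanish, i.e. `f` is
a tame `SL_{k+1}`-tiling. -/
theorem slk_tiling_tame_of_nonzero_minors {F : Type*} [Field F] (k : ℕ) (hk : 1 ≤ k)
    (f : ℤ → ℤ → F)
    (hSL : ∀ i j : ℤ, adjMinor f (k + 1) i j = 1)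
    (hnz : ∀ i j : ℤ, adjMinor f k i j ≠ 0) :
    ∀ i j : ℤ, adjMinor f (k + 2) i j = 0 :=
  slk_tiling_tame_of_nonzero_minors_general k f hSL hnz
end

section
/- Let k ≥ 1 and w ≥ 1 be integers and set n := k + w + 2. Let a^j : ℤ → ℝ (1 ≤ j ≤ k) be coefficients, extended by the conventions a_i^0 := 1, a_i^{k+1} := 1 and a_i^s := 0 for s > k+1. Assume the order-(k+1) difference equation V_i = a_i^1·V_{i-1} − a_i^2·V_{i-2} + ⋯ + (−1)^{k-1}·a_i^k·V_{i-k} + (−1)^k·V_{i-k-1} is n-superperiodic, i.e. a_{i+n}^j = a_i^j for all i,j and every solution V satisfies V_{i+n} = (−1)^k·V_i. For 0 ≤ j ≤ w−1 define α_i^{w-j} as the determinant of the (j+1)×(j+1) matrix whose (r,c)-entry (1 ≤ r,c ≤ j+1) is a_{i+r}^{r-c+1} if c ≤ r, is 1 if c = r+1, and is 0 if c > r+1. Then the Gale dual equation of order w+1, namely W_i = α_i^1·W_{i-1} − α_i^2·W_{i-2} + ⋯ + (−1)^{w-1}·α_i^w·W_{i-w} + (−1)^w·W_{i-w-1}, is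 n-superperiodic: its coefficients satisfy α_{i+n}^j = α_i^j for all i and 1 ≤ j ≤ w, and every solution W : ℤ → ℝ satisfies W_{i+n} = (−1)^w·W_i for all i. -/
/-!
Extend the Gale coefficients by `ᾱ^0 = ᾱ^{w+1} = 1` and by zero beyond `w + 1`, and write
`(L_a V)_x = ∑_j (-1)^j a_x^j V_{x-j}`. Expanding the Hessenberg determinants along their first
column shows that the composite `V ↦ ∑_s ᾱ_{q-s}^{w+1-s} (L_a V)_{q-s}` has no terms `V_{q-m}` with
`1 ≤ m ≤ w`. The terms with `w < m < n` vanish as well: evaluate the composite, which is zero on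
solutions of `L_a V = 0`, on the solution that is a delta function on a window of length `k + 1`;
superperiodicity `V_q = (-1)^k V_{q-n}` cancels the two extreme terms. Hence this composite is
`V ↦ V_q - (-1)^k V_{q-n}`. Reading the same double sum the other way round, the composite
`W ↦ ∑_j a_{i-j}^{k+1-j} (L_ᾱ W)_{i-j}` is `W ↦ W_i - (-1)^w W_{i-n}`, and it vanishes on
solutions of the dual equation.
-/

/-- The coefficient `α_i^s` of the combinatorial Gale transform: for `1 ≤ s ≤ w`,
writing `j = w - s`, it is the determinant of the `(j+1) × (j+1)` Hessenberg matrix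
whose `(r, c)`-entry (with `1 ≤ r, c ≤ j+1`) is `a_{i+r}^{r-c+1}` if `c ≤ r`,
is `1` if `c = r + 1`, and is `0` if `c > r + 1`. -/
noncomputable def galeCoeff (a : ℤ → ℕ → ℝ) (w : ℕ) (i : ℤ) (s : ℕ) : ℝ :=
  Matrix.det (Matrix.of fun r c : Fin (w - s + 1) =>
    if (c : ℕ) ≤ (r : ℕ) then a (i + (r : ℕ) + 1) ((r : ℕ) - (c : ℕ) + 1)
    else if (c : ℕ) = (r : ℕ) + 1 then 1 else 0)

open Finset

theorem neg_one_pow_mul_self (n : ℕ) : (-1 : ℝ) ^ n * (-1) ^ n = 1 :=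
  pow_mul_pow_eq_one n (by norm_num)

theorem neg_one_pow_mul_neg_one_pow_of_odd {a b c : ℕ} (h : (a + b + c) % 2 = 1) :
    (-1 : ℝ) ^ a * (-1) ^ b = -(-1) ^ c := by
  rw [← pow_add, neg_one_pow_congr (n := c + 1) (by simp only [Nat.even_iff]; omega), pow_succ,
    mul_neg_one]

noncomputable def hessenbergEntry (a : ℤ → ℕ → ℝ) (y : ℤ) (r c : ℕ) : ℝ :=
  if c ≤ r then a (y + r + 1) (r - c + 1) else if c = r + 1 then 1 else 0

noncomputable def hessenberg (a : ℤ → ℕ → ℝ) (y : ℤ) (N : ℕ) : Matrix (Fin N) (Fin N) ℝ :=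
  Matrix.of fun r c => hessenbergEntry a y r c

theorem galeCoeff_eq_det_hessenberg (a : ℤ → ℕ → ℝ) (w : ℕ) (i : ℤ) (s : ℕ) :
    galeCoeff a w i s = (hessenberg a i (w - s + 1)).det := rfl

theorem hessenbergEntry_succ_succ (a : ℤ → ℕ → ℝ) (y : ℤ) (r c : ℕ) :
    hessenbergEntry a y (r + 1) (c + 1) = hessenbergEntry a (y + 1) r c := by
  simp only [hessenbergEntry, add_le_add_iff_right, add_left_inj, Nat.add_sub_add_right]
  push_cast
  ring_nf

theorem det_hessenberg_submatrix_succAbove (a : ℤ → ℕ → ℝ) (N : ℕ) (y : ℤ) (t : Fin (N + 1)) :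
    ((hessenberg a y (N + 1)).submatrix t.succAbove Fin.succ).det =
      (hessenberg a (y + t + 1) (N - t)).det := by
  induction N generalizing y with
  | zero =>
    obtain rfl := Fin.fin_one_eq_zero t
    simp
  | succ N ih =>
    cases t using Fin.cases with
    | zero =>
      congr 1
      ext i j
      simp only [hessenberg, Matrix.submatrix_apply, Matrix.of_apply, Fin.succAbove_zero,
        Fin.val_succ, hessenbergEntry_succ_succ, Fin.val_zero, Nat.cast_zero, add_zero]
      rfl
    | succ t =>
      rw [Matrix.det_succ_row_zero, Fin.sum_univ_succ, Finset.sum_eq_zero]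
      · have hminor : ((hessenberg a y (N + 2)).submatrix t.succ.succAbove Fin.succ).submatrix
            Fin.succ (Fin.succAbove 0) =
              (hessenberg a (y + 1) (N + 1)).submatrix t.succAbove Fin.succ := by
          ext i j
          simp [hessenberg, hessenbergEntry_succ_succ]
        rw [hminor, ih]
        have hentry : (hessenberg a y (N + 2)).submatrix t.succ.succAbove Fin.succ 0 0 = 1 := by
          simp [hessenberg, hessenbergEntry]
        rw [hentry, Fin.val_zero, pow_zero, one_mul, one_mul, add_zero, Fin.val_succ,
          Nat.add_sub_add_right]
        congr 2
        push_cast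
        ring
      · intro j _
        simp [hessenberg, hessenbergEntry]

theorem det_hessenberg_succ (a : ℤ → ℕ → ℝ) (N : ℕ) (y : ℤ) :
    (hessenberg a y (N + 1)).det = ∑ t ∈ range (N + 1),
      (-1) ^ t * a (y + t + 1) (t + 1) * (hessenberg a (y + t + 1) (N - t)).det := by
  rw [Matrix.det_succ_column_zero, ← Fin.sum_univ_eq_sum_range
    (fun t => (-1) ^ t * a (y + t + 1) (t + 1) * (hessenberg a (y + t + 1) (N - t)).det)]
  refine sum_congr rfl fun t _ => ?_
  rw [det_hessenberg_submatrix_succAbove]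
  simp [hessenberg, hessenbergEntry]

theorem sum_det_hessenberg_mul_eq_zero (a : ℤ → ℕ → ℝ) (ha0 : ∀ x, a x 0 = 1) {m : ℕ}
    (hm : 1 ≤ m) (q : ℤ) :
    ∑ s ∈ range (m + 1), (-1) ^ s * (hessenberg a (q - s) s).det * a (q - s) (m - s) = 0 := by
  obtain ⟨M, rfl⟩ : ∃ M, m = M + 1 := ⟨m - 1, by omega⟩
  rw [sum_range_succ, Nat.sub_self, ha0, mul_one, det_hessenberg_succ, mul_sum,
    ← sum_range_reflect _ (M + 1), ← sum_add_distrib]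
  refine sum_eq_zero fun s hs => ?_
  have hsM : s ≤ M := Nat.lt_succ_iff.mp (mem_range.mp hs)
  have hsign : (-1 : ℝ) ^ (M + 1) * (-1) ^ s = -(-1) ^ (M - s) :=
    neg_one_pow_mul_neg_one_pow_of_odd (by omega)
  rw [show M + 1 - 1 - s = M - s by omega, show M + 1 - (M - s) = s + 1 by omega,
    show q - ((M - s : ℕ) : ℤ) = q - ((M + 1 : ℕ) : ℤ) + s + 1 by push_cast [hsM]; ring]
  linear_combination (a (q - ((M + 1 : ℕ) : ℤ) + s + 1) (s + 1) *
    (hessenberg a (q - ((M + 1 : ℕ) : ℤ) + s + 1) (M - s)).det) * hsign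

def SolvesDiffEq (K : ℕ) (c : ℤ → ℕ → ℝ) (V : ℤ → ℝ) : Prop :=
  ∀ i : ℤ, V i = (∑ j ∈ Icc 1 K, (-1) ^ (j - 1) * c i j * V (i - j)) + (-1) ^ K * V (i - K - 1)

theorem SolvesDiffEq.sum_eq_zero {K : ℕ} {c e : ℤ → ℕ → ℝ} {V : ℤ → ℝ} (hV : SolvesDiffEq K c V)
    (he0 : ∀ x, e x 0 = 1) (heK : ∀ x, e x (K + 1) = 1)
    (hec : ∀ x j, 1 ≤ j → j ≤ K → e x j = c x j) (i : ℤ) :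
    ∑ j ∈ range (K + 2), (-1) ^ j * e i j * V (i - j) = 0 := by
  have hmid : ∑ j ∈ range K, (-1) ^ (j + 1) * e i (j + 1) * V (i - (j + 1 : ℕ)) =
      -∑ j ∈ Icc 1 K, (-1) ^ (j - 1) * c i j * V (i - j) := by
    rw [← Finset.Ico_add_one_right_eq_Icc, sum_Ico_eq_sum_range, Nat.add_sub_cancel,
      ← sum_neg_distrib]
    refine sum_congr rfl fun j hj => ?_
    rw [add_comm 1 j, hec i (j + 1) (by omega) (by have := mem_range.mp hj; omega),
      Nat.add_sub_cancel, pow_succ]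
    ring
  rw [sum_range_succ, sum_range_succ', hmid, he0, heK, Nat.cast_zero, sub_zero, hV i,
    show i - ((K + 1 : ℕ) : ℤ) = i - K - 1 by push_cast; ring]
  ring

noncomputable def windowSolution (K : ℕ) (c : ℤ → ℕ → ℝ) (p : ℤ) (init : ℤ → ℝ) (i : ℤ) : ℝ :=
  if p ≤ i ∧ i ≤ p + K then init i
  else if i < p then
    (-1) ^ K * (windowSolution K c p init (i + K + 1) - ∑ j ∈ (Icc 1 K).attach,
      (-1) ^ ((j : ℕ) - 1) * c (i + K + 1) j * windowSolution K c p init (i + K + 1 - (j : ℕ)))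
  else
    (∑ j ∈ (Icc 1 K).attach,
        (-1) ^ ((j : ℕ) - 1) * c i j * windowSolution K c p init (i - (j : ℕ))) +
      (-1) ^ K * windowSolution K c p init (i - K - 1)
termination_by (p - i).toNat + (i - (p + K)).toNat
decreasing_by
  all_goals
    try have := mem_Icc.mp j.2
    omega

theorem windowSolution_of_mem {K : ℕ} {c : ℤ → ℕ → ℝ} {p : ℤ} {init : ℤ → ℝ} {i : ℤ}
    (h₁ : p ≤ i) (h₂ : i ≤ p + K) : windowSolution K c p init i = init i := by
  rw [windowSolution, if_pos ⟨h₁, h₂⟩]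

theorem solvesDiffEq_windowSolution (K : ℕ) (c : ℤ → ℕ → ℝ) (p : ℤ) (init : ℤ → ℝ) :
    SolvesDiffEq K c (windowSolution K c p init) := by
  intro i
  rw [← sum_attach (Icc 1 K)]
  by_cases hi : p + K < i
  · rw [windowSolution, if_neg (by omega), if_neg (by omega)]
  · have hback : windowSolution K c p init (i - K - 1) = (-1) ^ K * (windowSolution K c p init i -
        ∑ j ∈ (Icc 1 K).attach,
          (-1) ^ ((j : ℕ) - 1) * c i j * windowSolution K c p init (i - (j : ℕ))) := by
      rw [windowSolution, if_neg (by omega), if_pos (by omega), show i - K - 1 + K + 1 = i by ring]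
    rw [hback, ← mul_assoc, neg_one_pow_mul_self, one_mul]
    ring

theorem exists_solvesDiffEq_eq_on_window (K : ℕ) (c : ℤ → ℕ → ℝ) (p : ℤ) (init : ℤ → ℝ) :
    ∃ V, SolvesDiffEq K c V ∧ ∀ r, p ≤ r → r ≤ p + K → V r = init r :=
  ⟨_, solvesDiffEq_windowSolution K c p init, fun _ => windowSolution_of_mem⟩

noncomputable def compCoeff (A : ℕ) (c d : ℤ → ℕ → ℝ) (q : ℤ) (m : ℕ) : ℝ :=
  ∑ s ∈ range (A + 1) with s ≤ m, (-1) ^ s * c (q - s) (A - s) * d (q - s) (m - s)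

theorem sum_mul_sum_eq_sum_compCoeff (A B : ℕ) (c d : ℤ → ℕ → ℝ)
    (hd : ∀ x j, B < j → d x j = 0) (V : ℤ → ℝ) (q : ℤ) :
    ∑ s ∈ range (A + 1), c (q - s) (A - s) *
        ∑ j ∈ range (B + 1), (-1) ^ j * d (q - s) j * V (q - s - j) =
      ∑ m ∈ range (A + B + 1), (-1) ^ m * compCoeff A c d q m * V (q - m) := by
  simp only [compCoeff, sum_filter, mul_sum, sum_mul]
  conv_rhs => rw [sum_comm]
  refine sum_congr rfl fun s hs => ?_
  have hsA : s ≤ A := Nat.lt_succ_iff.mp (mem_range.mp hs)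
  rw [show A + B + 1 = s + ((B + 1) + (A - s)) by omega, sum_range_add _ s,
    sum_range_add _ (B + 1) (A - s),
    sum_eq_zero (s := range s) fun m hm => by rw [if_neg (by simpa using hm)]; ring,
    sum_eq_zero (s := range (A - s)) fun j _ => by rw [hd _ _ (by omega)]; simp, zero_add, add_zero]
  refine sum_congr rfl fun j _ => ?_
  rw [if_pos (by omega), Nat.add_sub_cancel_left,
    show q - ((s + j : ℕ) : ℤ) = q - s - j by push_cast; ring, pow_add]
  linear_combination -(c (q - s) (A - s) * d (q - s) j * V (q - s - j) * (-1) ^ j) *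
    neg_one_pow_mul_self s

theorem sum_compCoeff_mul_eq_zero {A B : ℕ} {c d : ℤ → ℕ → ℝ} (hd : ∀ x j, B < j → d x j = 0)
    {V : ℤ → ℝ} (hV : ∀ x, ∑ j ∈ range (B + 1), (-1) ^ j * d x j * V (x - j) = 0) (q : ℤ) :
    ∑ m ∈ range (A + B + 1), (-1) ^ m * compCoeff A c d q m * V (q - m) = 0 := by
  simp [← sum_mul_sum_eq_sum_compCoeff A B c d hd, hV]

theorem compCoeff_zero (A : ℕ) (c d : ℤ → ℕ → ℝ) (q : ℤ) : compCoeff A c d q 0 = c q A * d q 0 := by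
  simp [compCoeff]

theorem compCoeff_add (A B : ℕ) (c d : ℤ → ℕ → ℝ) (hd : ∀ x j, B < j → d x j = 0) (q : ℤ) :
    compCoeff A c d q (A + B) = (-1) ^ A * c (q - A) 0 * d (q - A) B := by
  rw [compCoeff, sum_eq_single_of_mem A (by simp)]
  · simp
  · intro s hs hsA
    have := mem_range.mp (mem_filter.mp hs).1
    rw [hd _ _ (by omega), mul_zero]

theorem neg_one_pow_mul_compCoeff_comm (A B : ℕ) (c d : ℤ → ℕ → ℝ)
    (hc : ∀ x j, A < j → c x j = 0) (hd : ∀ x j, B < j → d x j = 0) (q : ℤ) {m : ℕ}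
    (hm : m ≤ A + B) :
    (-1) ^ m * compCoeff A c d q m = (-1) ^ B * compCoeff B d c (q - m + B) (A + B - m) := by
  have hterm : ∀ s, s ≤ A → s ≤ m → m ≤ s + B →
      (-1) ^ m * ((-1) ^ s * c (q - s) (A - s) * d (q - s) (m - s)) =
        (-1) ^ B * ((-1) ^ (s + B - m) * d (q - m + B - (s + B - m : ℕ)) (B - (s + B - m)) *
          c (q - m + B - (s + B - m : ℕ)) (A + B - m - (s + B - m))) := by
    intro s hsA hsm hmB
    rw [show q - m + B - ((s + B - m : ℕ) : ℤ) = q - s by push_cast [hmB]; ring,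
      show B - (s + B - m) = m - s by omega, show A + B - m - (s + B - m) = A - s by omega]
    have hsign : (-1 : ℝ) ^ m * (-1) ^ s = (-1) ^ B * (-1) ^ (s + B - m) := by
      rw [← pow_add, ← pow_add]
      exact neg_one_pow_congr (by simp only [Nat.even_iff]; omega)
    linear_combination (c (q - s) (A - s) * d (q - s) (m - s)) * hsign
  have hsupp : ∀ s : ℕ,
      (-1) ^ m * ((-1) ^ s * c (q - s) (A - s) * d (q - s) (m - s)) ≠ 0 → m - s ≤ B :=
    fun s hne => by
      by_contra h
      exact hne (by rw [hd _ _ (by omega)]; ring)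
  rw [compCoeff, compCoeff, mul_sum, mul_sum]
  refine sum_bij_ne_zero (fun s _ _ => s + B - m) ?_ ?_ ?_ ?_
  · intro s hs hne
    have := hsupp s hne
    simp only [mem_filter, mem_range] at hs ⊢
    omega
  · intro s₁ hs₁ hne₁ s₂ hs₂ hne₂ h
    have := hsupp s₁ hne₁
    have := hsupp s₂ hne₂
    simp only [mem_filter, mem_range] at hs₁ hs₂
    omega
  · intro u hu hne
    have : A + B - m - u ≤ A := by
      by_contra h
      exact hne (by rw [hc _ _ (by omega)]; ring)
    simp only [mem_filter, mem_range] at hu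
    refine ⟨u + m - B, by simp only [mem_filter, mem_range]; omega, ?_, by omega⟩
    rwa [hterm _ (by omega) (by omega) (by omega), show u + m - B + B - m = u by omega]
  · intro s hs hne
    have := hsupp s hne
    simp only [mem_filter, mem_range] at hs
    exact hterm s (by omega) hs.2 (by omega)

noncomputable def galeExt (a : ℤ → ℕ → ℝ) (w : ℕ) (x : ℤ) (s : ℕ) : ℝ :=
  if s = 0 then 1 else if s ≤ w + 1 then (hessenberg a x (w + 1 - s)).det else 0

section galeExt

variable (a : ℤ → ℕ → ℝ) (w : ℕ) (x : ℤ)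

theorem galeExt_zero : galeExt a w x 0 = 1 := rfl

theorem galeExt_succ : galeExt a w x (w + 1) = 1 := by
  rw [galeExt, if_neg (by omega), if_pos le_rfl, Nat.sub_self, Matrix.det_fin_zero]

theorem galeExt_of_lt {s : ℕ} (hs : w + 1 < s) : galeExt a w x s = 0 := by
  rw [galeExt, if_neg (by omega), if_neg (by omega)]

theorem galeExt_eq_galeCoeff {s : ℕ} (h₁ : 1 ≤ s) (h₂ : s ≤ w) :
    galeExt a w x s = galeCoeff a w x s := by
  rw [galeExt, if_neg (by omega), if_pos (by omega), galeCoeff_eq_det_hessenberg,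
    show w + 1 - s = w - s + 1 by omega]

theorem galeExt_sub {s : ℕ} (hs : s ≤ w) : galeExt a w x (w + 1 - s) = (hessenberg a x s).det := by
  rw [galeExt, if_neg (by omega), if_pos (by omega), show w + 1 - (w + 1 - s) = s by omega]

end galeExt

theorem compCoeff_galeExt_of_le {a : ℤ → ℕ → ℝ} (ha0 : ∀ x, a x 0 = 1) {w m : ℕ} (h₁ : 1 ≤ m)
    (h₂ : m ≤ w) (q : ℤ) : compCoeff (w + 1) (galeExt a w) a q m = 0 := by
  rw [compCoeff, show (range (w + 1 + 1)).filter (· ≤ m) = range (m + 1) by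
      ext; simp only [mem_filter, mem_range]; omega,
    ← sum_det_hessenberg_mul_eq_zero a ha0 h₁ q]
  refine sum_congr rfl fun s hs => ?_
  rw [galeExt_sub a w _ (by have := mem_range.mp hs; omega)]

theorem compCoeff_galeExt_of_superperiodic {k w : ℕ} {a : ℤ → ℕ → ℝ} (ha0 : ∀ x, a x 0 = 1)
    (hak : ∀ x, a x (k + 1) = 1) (has : ∀ x s, k + 1 < s → a x s = 0)
    (hsuper : ∀ V, SolvesDiffEq k a V → ∀ i : ℤ, V (i + ((k : ℤ) + w + 2)) = (-1) ^ k * V i)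
    {m : ℕ} (h₁ : w + 1 ≤ m) (h₂ : m ≤ k + w + 1) (q : ℤ) :
    compCoeff (w + 1) (galeExt a w) a q m = 0 := by
  obtain ⟨V, hV, hVwindow⟩ := exists_solvesDiffEq_eq_on_window k a (q - k - w - 1)
    (fun r => if r = q - m then 1 else 0)
  have hwindow : ∀ t : ℕ, w + 1 ≤ t → t ≤ k + w + 1 → V (q - t) = if t = m then 1 else 0 := by
    intro t ht₁ ht₂
    rw [hVwindow _ (by omega) (by omega)]
    simp
  have hsum := sum_compCoeff_mul_eq_zero (A := w + 1) (c := galeExt a w) has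
    (hV.sum_eq_zero ha0 hak fun _ _ _ _ => rfl) q
  have hmid : ∑ t ∈ range (k + w + 1),
      (-1) ^ (t + 1) * compCoeff (w + 1) (galeExt a w) a q (t + 1) * V (q - (t + 1 : ℕ)) =
        (-1) ^ m * compCoeff (w + 1) (galeExt a w) a q m := by
    rw [sum_eq_single_of_mem (m - 1) (mem_range.mpr (by omega)), Nat.sub_add_cancel (by omega),
      hwindow m h₁ h₂, if_pos rfl, mul_one]
    intro t ht htm
    rcases le_or_gt (t + 1) w with h | h
    · rw [compCoeff_galeExt_of_le ha0 (by omega) h, mul_zero, zero_mul]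
    · rw [hwindow (t + 1) (by omega) (by have := mem_range.mp ht; omega), if_neg (by omega),
        mul_zero]
  have hperiod := hsuper V hV (q - (k + w + 2))
  have hsign : (-1 : ℝ) ^ (k + w + 1 + 1) * (-1) ^ (w + 1) = -(-1) ^ k :=
    neg_one_pow_mul_neg_one_pow_of_odd (by omega)
  rw [sub_add_cancel] at hperiod
  rw [sum_range_succ, compCoeff_add _ _ _ _ has, galeExt_zero, hak,
    show w + 1 + (k + 1) = k + w + 1 + 1 by ring, sum_range_succ', hmid, compCoeff_zero,
    galeExt_succ, ha0, Nat.cast_zero, sub_zero,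
    show ((k + w + 1 + 1 : ℕ) : ℤ) = k + w + 2 by push_cast; ring] at hsum
  have : (-1) ^ m * compCoeff (w + 1) (galeExt a w) a q m = 0 := by
    linear_combination hsum - hperiod - V (q - (k + w + 2)) * hsign
  simpa using this

theorem compCoeff_galeExt_eq_zero {k w : ℕ} {a : ℤ → ℕ → ℝ} (ha0 : ∀ x, a x 0 = 1)
    (hak : ∀ x, a x (k + 1) = 1) (has : ∀ x s, k + 1 < s → a x s = 0)
    (hsuper : ∀ V, SolvesDiffEq k a V → ∀ i : ℤ, V (i + ((k : ℤ) + w + 2)) = (-1) ^ k * V i)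
    {m : ℕ} (h₁ : 1 ≤ m) (h₂ : m ≤ k + w + 1) (q : ℤ) :
    compCoeff (w + 1) (galeExt a w) a q m = 0 := by
  rcases le_or_gt m w with h | h
  · exact compCoeff_galeExt_of_le ha0 h₁ h q
  · exact compCoeff_galeExt_of_superperiodic ha0 hak has hsuper h h₂ q

theorem galeCoeff_add_of_periodic {a : ℤ → ℕ → ℝ} {N : ℤ} (h : ∀ x j, 1 ≤ j → a (x + N) j = a x j)
    (w : ℕ) (i : ℤ) (s : ℕ) : galeCoeff a w (i + N) s = galeCoeff a w i s := by
  simp only [galeCoeff_eq_det_hessenberg, hessenberg, hessenbergEntry,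
    show ∀ r : ℕ, i + N + r + 1 = i + r + 1 + N from fun r => by ring, h _ _ (Nat.le_add_left 1 _)]

theorem galeDual_add_period {k w : ℕ} {a : ℤ → ℕ → ℝ} (ha0 : ∀ x, a x 0 = 1)
    (hak : ∀ x, a x (k + 1) = 1) (has : ∀ x s, k + 1 < s → a x s = 0)
    (hsuper : ∀ V, SolvesDiffEq k a V → ∀ i : ℤ, V (i + ((k : ℤ) + w + 2)) = (-1) ^ k * V i)
    {W : ℤ → ℝ} (hW : SolvesDiffEq w (galeCoeff a w) W) (i : ℤ) :
    W (i + ((k : ℤ) + w + 2)) = (-1) ^ w * W i := by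
  have hsum := sum_compCoeff_mul_eq_zero (A := k + 1) (c := a) (galeExt_of_lt a w)
    (hW.sum_eq_zero (galeExt_zero a w) (galeExt_succ a w) (galeExt_eq_galeCoeff a w))
    (i + (k + w + 2))
  have hmid : ∀ t ∈ range (k + w + 1), (-1) ^ (t + 1) *
      compCoeff (k + 1) a (galeExt a w) (i + (k + w + 2)) (t + 1) *
        W (i + (k + w + 2) - (t + 1 : ℕ)) = 0 := by
    intro t ht
    have ht' := mem_range.mp ht
    rw [neg_one_pow_mul_compCoeff_comm _ _ _ _ has (galeExt_of_lt a w) _ (by omega),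
      compCoeff_galeExt_eq_zero ha0 hak has hsuper (by omega) (by omega)]
    ring
  rw [sum_range_succ, compCoeff_add _ _ _ _ (galeExt_of_lt a w), ha0, galeExt_succ,
    show k + 1 + (w + 1) = k + w + 1 + 1 by ring, sum_range_succ', sum_eq_zero hmid,
    compCoeff_zero, galeExt_zero, hak, Nat.cast_zero, sub_zero,
    show i + (k + w + 2) - ((k + w + 1 + 1 : ℕ) : ℤ) = i by push_cast; ring] at hsum
  have hsign : (-1 : ℝ) ^ (k + w + 1 + 1) * (-1) ^ (k + 1) = -(-1) ^ w :=
    neg_one_pow_mul_neg_one_pow_of_odd (by omega)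
  linear_combination hsum - W i * hsign

theorem gale_dual_equation_superperiodic_general (k w : ℕ)
    (a : ℤ → ℕ → ℝ)
    (ha0 : ∀ i : ℤ, a i 0 = 1)
    (hak : ∀ i : ℤ, a i (k + 1) = 1)
    (has : ∀ i : ℤ, ∀ s : ℕ, k + 1 < s → a i s = 0)
    (hper : ∀ i : ℤ, ∀ j : ℕ, 1 ≤ j → j ≤ k →
      a (i + ((k : ℤ) + (w : ℤ) + 2)) j = a i j)
    (hsuper : ∀ V : ℤ → ℝ,
      (∀ i : ℤ, V i = (∑ j ∈ Finset.Icc 1 k,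
          (-1) ^ (j - 1) * a i j * V (i - (j : ℤ))) + (-1) ^ k * V (i - (k : ℤ) - 1)) →
      ∀ i : ℤ, V (i + ((k : ℤ) + (w : ℤ) + 2)) = (-1) ^ k * V i) :
    (∀ i : ℤ, ∀ s : ℕ, 1 ≤ s → s ≤ w →
      galeCoeff a w (i + ((k : ℤ) + (w : ℤ) + 2)) s = galeCoeff a w i s) ∧
    (∀ W : ℤ → ℝ,
      (∀ i : ℤ, W i = (∑ s ∈ Finset.Icc 1 w,
          (-1) ^ (s - 1) * galeCoeff a w i s * W (i - (s : ℤ))) +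
            (-1) ^ w * W (i - (w : ℤ) - 1)) →
      ∀ i : ℤ, W (i + ((k : ℤ) + (w : ℤ) + 2)) = (-1) ^ w * W i) := by
  have hperiodic : ∀ x j, 1 ≤ j → a (x + ((k : ℤ) + w + 2)) j = a x j := by
    intro x j hj
    rcases lt_trichotomy j (k + 1) with h | rfl | h
    · exact hper x j hj (by omega)
    · rw [hak, hak]
    · rw [has _ _ h, has _ _ h]
  exact ⟨fun i s _ _ => galeCoeff_add_of_periodic hperiodic w i s,
    fun W hW => galeDual_add_period ha0 hak has hsuper hW⟩

/-- **The combinatorial Gale transform preserves superperiodicity.**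
Let `n = k + w + 2` and let the order-`(k+1)` difference equation with coefficients
`a i j` (extended by `a i 0 = 1`, `a i (k+1) = 1`, `a i s = 0` for `s > k+1`) be
`n`-superperiodic.  Then its Gale dual equation of order `w+1`, with coefficients
`galeCoeff a w i s`, is also `n`-superperiodic: the coefficients are `n`-periodic
and every solution `W` satisfies `W (i+n) = (-1)^w * W i`. -/
theorem gale_dual_equation_superperiodic (k w : ℕ) (hk : 1 ≤ k) (hw : 1 ≤ w)
    (a : ℤ → ℕ → ℝ)
    (ha0 : ∀ i : ℤ, a i 0 = 1)
    (hak : ∀ i : ℤ, a i (k + 1) = 1)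
    (has : ∀ i : ℤ, ∀ s : ℕ, k + 1 < s → a i s = 0)
    (hper : ∀ i : ℤ, ∀ j : ℕ, 1 ≤ j → j ≤ k →
      a (i + ((k : ℤ) + (w : ℤ) + 2)) j = a i j)
    (hsuper : ∀ V : ℤ → ℝ,
      (∀ i : ℤ, V i = (∑ j ∈ Finset.Icc 1 k,
          (-1) ^ (j - 1) * a i j * V (i - (j : ℤ))) + (-1) ^ k * V (i - (k : ℤ) - 1)) →
      ∀ i : ℤ, V (i + ((k : ℤ) + (w : ℤ) + 2)) = (-1) ^ k * V i) :
    (∀ i : ℤ, ∀ s : ℕ, 1 ≤ s → s ≤ w →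
      galeCoeff a w (i + ((k : ℤ) + (w : ℤ) + 2)) s = galeCoeff a w i s) ∧
    (∀ W : ℤ → ℝ,
      (∀ i : ℤ, W i = (∑ s ∈ Finset.Icc 1 w,
          (-1) ^ (s - 1) * galeCoeff a w i s * W (i - (s : ℤ))) +
            (-1) ^ w * W (i - (w : ℤ) - 1)) →
      ∀ i : ℤ, W (i + ((k : ℤ) + (w : ℤ) + 2)) = (-1) ^ w * W i) :=
  gale_dual_equation_superperiodic_general k w a ha0 hak has hper hsuper
end
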